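/- arXiv:1802.06141 — 10 statements merged into one kernel-verified Lean document; each statement's English description precedes it below -/
import Mathlib

section
/- Let C be a finite quotienting lattice of languages over A and let ≤_C be its canonical preorder. Let ∼ be the equivalence generated by ≤_C (u ∼ v iff u ≤_C v and v ≤_C u). Then ∼ is a congruence of finite index on A*, and consequently there exists p ≥ 1 such that for all m, m' ≥ 1 and all words w, w^{pm} ≤_C w^{pm'}. -/
/-- The canonical preorder `≤_C` on words. -/
def leC {A : Type} (C : Set (Set (List A))) (u v : List A) : Prop :=
  ∀ L ∈ C, u ∈ L → v ∈ L

/-- The equivalence generated by `≤_C`. -/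
def eqvC {A : Type} (C : Set (Set (List A))) (u v : List A) : Prop :=
  leC C u v ∧ leC C v u

/-- `n`-th power of a word in the free monoid: `w^n`. -/
def wpow {A : Type} (w : List A) (n : ℕ) : List A :=
  (List.replicate n w).flatten

/-
Since `C` is closed under left and right quotients, `u ≤_C u'` and `v ≤_C v'` give
`u v ≤_C u v' ≤_C u' v'`, so `∼` is a congruence. A class of `∼` is determined by the set of
languages of `C` containing it, hence `A*/∼` is a finite monoid. In a finite monoid some power
of every element is idempotent, and a common multiple `p` of these exponents makes `x ^ p`
idempotent for all `x`; then `x ^ (p * m) = x ^ p` for every `m ≥ 1`.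
-/

section IdempotentPower

variable {M : Type*} [Monoid M]

lemma pow_add_mul_eq_pow_of_pow_add_eq {x : M} {i c : ℕ} (h : x ^ (i + c) = x ^ i) {b : ℕ}
    (hb : i ≤ b) (t : ℕ) : x ^ (b + t * c) = x ^ b := by
  obtain ⟨d, rfl⟩ := Nat.exists_eq_add_of_le hb
  induction t with
  | zero => simp
  | succ t ih =>
    calc x ^ (i + d + (t + 1) * c) = x ^ (i + c) * x ^ (d + t * c) := by
          rw [← pow_add]; ring_nf
      _ = x ^ (i + d + t * c) := by rw [h, ← pow_add, add_assoc]
      _ = x ^ (i + d) := ih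

lemma exists_isIdempotentElem_pow [Finite M] (x : M) : ∃ n ≠ 0, IsIdempotentElem (x ^ n) := by
  obtain ⟨i, j, hij, hx⟩ := Set.finite_univ.exists_lt_map_eq_of_forall_mem
    (f := fun n : ℕ ↦ x ^ n) (fun _ ↦ Set.mem_univ _)
  obtain ⟨c, rfl⟩ := Nat.exists_eq_add_of_lt hij
  -- any multiple of the period `c + 1` that is at least `i` works
  have hper : x ^ (i + (c + 1)) = x ^ i := hx.symm
  refine ⟨(i + 1) * (c + 1), by positivity, ?_⟩
  rw [IsIdempotentElem, ← pow_add]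
  exact pow_add_mul_eq_pow_of_pow_add_eq hper (by nlinarith) (i + 1)

lemma exists_forall_isIdempotentElem_pow [Finite M] :
    ∃ p ≠ 0, ∀ x : M, IsIdempotentElem (x ^ p) := by
  have := Fintype.ofFinite M
  choose n hn0 hn using exists_isIdempotentElem_pow (M := M)
  refine ⟨∏ x, n x, Finset.prod_ne_zero_iff.2 fun x _ ↦ hn0 x, fun x ↦ ?_⟩
  obtain ⟨k, hk⟩ := Finset.dvd_prod_of_mem n (Finset.mem_univ x)
  rw [hk, pow_mul]
  exact (hn x).pow k

end IdempotentPower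

lemma FreeMonoid.ofList_wpow {A : Type} (w : List A) (n : ℕ) :
    FreeMonoid.ofList (wpow w n) = FreeMonoid.ofList w ^ n := by
  rw [wpow, FreeMonoid.ofList_flatten, List.map_replicate, List.prod_replicate]

section CanonicalCongruence

variable {A : Type} {C : Set (Set (List A))}

def IsClosedUnderQuotients (C : Set (Set (List A))) : Prop :=
  ∀ L ∈ C, ∀ u : List A, {w : List A | u ++ w ∈ L} ∈ C ∧ {w : List A | w ++ u ∈ L} ∈ C

lemma leC_append (hC : IsClosedUnderQuotients C) {u u' v v' : List A} (hu : leC C u u')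
    (hv : leC C v v') : leC C (u ++ v) (u' ++ v') :=
  fun L hL huv ↦ hu _ (hC L hL v').2 (hv _ (hC L hL u).1 huv)

lemma eqvC_append (hC : IsClosedUnderQuotients C) {u u' v v' : List A} (hu : eqvC C u u')
    (hv : eqvC C v v') : eqvC C (u ++ v) (u' ++ v') :=
  ⟨leC_append hC hu.1 hv.1, leC_append hC hu.2 hv.2⟩

lemma eqvC_iff_languages_eq {u v : List A} :
    eqvC C u v ↔ {L : C | u ∈ (L : Set (List A))} = {L : C | v ∈ (L : Set (List A))} := by
  simp only [eqvC, leC, Set.ext_iff, Set.mem_ofPred_eq, Subtype.forall]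
  exact ⟨fun h L hL ↦ ⟨h.1 L hL, h.2 L hL⟩, fun h ↦ ⟨fun L hL ↦ (h L hL).1, fun L hL ↦ (h L hL).2⟩⟩

/-- The congruence `∼` on `A*`, with `A*` modelled as `FreeMonoid A`. -/
def eqvCon (hC : IsClosedUnderQuotients C) : Con (FreeMonoid A) where
  r u v := eqvC C u.toList v.toList
  iseqv :=
    { refl := fun _ ↦ ⟨fun _ _ h ↦ h, fun _ _ h ↦ h⟩
      symm := fun h ↦ ⟨h.2, h.1⟩
      trans := fun h₁ h₂ ↦ ⟨fun L hL h ↦ h₂.1 L hL (h₁.1 L hL h),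
        fun L hL h ↦ h₁.2 L hL (h₂.2 L hL h)⟩ }
  mul' := eqvC_append hC

lemma eqvCon_coe_eq_iff (hC : IsClosedUnderQuotients C) {u v : List A} :
    (FreeMonoid.ofList u : (eqvCon hC).Quotient) = FreeMonoid.ofList v ↔ eqvC C u v :=
  Con.eq _

lemma finite_eqvCon_quotient (hfin : C.Finite) (hC : IsClosedUnderQuotients C) :
    Finite (eqvCon hC).Quotient := by
  have := hfin.to_subtype
  refine Finite.of_injective
    (Quotient.lift (s := (eqvCon hC).toSetoid) (fun u ↦ {L : C | u.toList ∈ (L : Set (List A))})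
      fun _ _ h ↦ eqvC_iff_languages_eq.1 h) ?_
  rintro ⟨u⟩ ⟨v⟩ h
  exact Quotient.sound (eqvC_iff_languages_eq.2 h)

end CanonicalCongruence

theorem stmt_2_general {A : Type} (C : Set (Set (List A)))
    (hfin : C.Finite)
    (hql : ∀ L ∈ C, ∀ u : List A, {w : List A | u ++ w ∈ L} ∈ C)
    (hqr : ∀ L ∈ C, ∀ u : List A, {w : List A | w ++ u ∈ L} ∈ C) :
    -- `∼` is a congruence
    (∀ u u' v v' : List A, eqvC C u u' → eqvC C v v' → eqvC C (u ++ v) (u' ++ v')) ∧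
    -- of finite index
    {S : Set (List A) | ∃ u : List A, S = {v : List A | eqvC C u v}}.Finite ∧
    -- consequently there is `p ≥ 1` with `w^{pm} ≤_C w^{pm'}` for all `m, m' ≥ 1`
    (∃ p : ℕ, 1 ≤ p ∧ ∀ m m' : ℕ, 1 ≤ m → 1 ≤ m' → ∀ w : List A,
      leC C (wpow w (p * m)) (wpow w (p * m'))) := by
  have hC : IsClosedUnderQuotients C := fun L hL u ↦ ⟨hql L hL u, hqr L hL u⟩
  have := finite_eqvCon_quotient hfin hC
  refine ⟨fun _ _ _ _ ↦ eqvC_append hC, ?_, ?_⟩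
  · refine (Set.finite_range
      fun q : (eqvCon hC).Quotient ↦ {v : List A | q = FreeMonoid.ofList v}).subset ?_
    rintro _ ⟨u, rfl⟩
    exact ⟨FreeMonoid.ofList u, by simp only [eqvCon_coe_eq_iff]⟩
  · obtain ⟨p, hp0, hp⟩ := exists_forall_isIdempotentElem_pow (M := (eqvCon hC).Quotient)
    refine ⟨p, Nat.one_le_iff_ne_zero.2 hp0, fun m m' hm hm' w ↦ ?_⟩
    have hpow : ∀ n ≠ 0, (FreeMonoid.ofList (wpow w (p * n)) : (eqvCon hC).Quotient) =
        FreeMonoid.ofList w ^ p := by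
      intro n hn
      rw [FreeMonoid.ofList_wpow]
      change (FreeMonoid.ofList w : (eqvCon hC).Quotient) ^ (p * n) = _
      rw [pow_mul, (hp _).pow_eq hn]
    refine ((eqvCon_coe_eq_iff hC).1 ?_).1
    rw [hpow m (by omega), hpow m' (by omega)]

theorem stmt_2 {A : Type} (C : Set (Set (List A)))
    (hfin : C.Finite)
    (hempty : (∅ : Set (List A)) ∈ C) (huniv : (Set.univ : Set (List A)) ∈ C)
    (hunion : ∀ K L : Set (List A), K ∈ C → L ∈ C → K ∪ L ∈ C)
    (hinter : ∀ K L : Set (List A), K ∈ C → L ∈ C → K ∩ L ∈ C)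
    (hql : ∀ L ∈ C, ∀ u : List A, {w : List A | u ++ w ∈ L} ∈ C)
    (hqr : ∀ L ∈ C, ∀ u : List A, {w : List A | w ++ u ∈ L} ∈ C) :
    -- `∼` is a congruence
    (∀ u u' v v' : List A, eqvC C u u' → eqvC C v v' → eqvC C (u ++ v) (u' ++ v')) ∧
    -- of finite index
    {S : Set (List A) | ∃ u : List A, S = {v : List A | eqvC C u v}}.Finite ∧
    -- consequently there is `p ≥ 1` with `w^{pm} ≤_C w^{pm'}` for all `m, m' ≥ 1`
    (∃ p : ℕ, 1 ≤ p ∧ ∀ m m' : ℕ, 1 ≤ m → 1 ≤ m' → ∀ w : List A,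
      leC C (wpow w (p * m)) (wpow w (p * m'))) :=
  stmt_2_general C hfin hql hqr
end

section
/- Let C be a quotienting lattice of regular languages over A, M a finite monoid, and α : A* → M a surjective morphism. If (s₁,t₁) and (s₂,t₂) are C-pairs for α, then (s₁s₂, t₁t₂) is a C-pair for α. -/
/-!
If `K ∈ C` separated `α⁻¹(s₁s₂)` from `α⁻¹(t₁t₂)`, then `K₂ = ⋂_{u ∈ α⁻¹(s₁)} u⁻¹K` would contain
`α⁻¹(s₂)`; it lies in `C` because, by Myhill–Nerode, it is a finite intersection of left quotients
of `K`. As `(s₂, t₂)` is a `C`-pair, some `v ∈ K₂` has `α v = t₂`, and then the right quotient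
`Kv⁻¹ ∈ C` separates `α⁻¹(s₁)` from `α⁻¹(t₁)`.
-/

/-- A language is regular when it is accepted by a DFA with finitely many states. -/
def IsReg {A : Type} (L : Set (List A)) : Prop :=
  ∃ (σ : Type) (_ : Fintype σ) (dfa : DFA A σ), ∀ w : List A, w ∈ dfa.accepts ↔ w ∈ L

/-- `(s,t)` is a `C`-pair for `α`: `α⁻¹(s)` is not `C`-separable from `α⁻¹(t)`. -/
def CPair {A M : Type} (C : Set (Set (List A))) (α : List A → M) (s t : M) : Prop :=
  ¬ ∃ K ∈ C, α ⁻¹' {s} ⊆ K ∧ K ∩ α ⁻¹' {t} = ∅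

open Set

def CSeparable {X : Type*} (C : Set (Set X)) (L L' : Set X) : Prop :=
  ∃ K ∈ C, L ⊆ K ∧ Disjoint K L'

theorem CSeparable.mono {X : Type*} {C : Set (Set X)} {L L' L₀ L₀' : Set X}
    (h : CSeparable C L L') (hL : L₀ ⊆ L) (hL' : L₀' ⊆ L') : CSeparable C L₀ L₀' :=
  let ⟨K, hKC, hLK, hKL'⟩ := h
  ⟨K, hKC, hL.trans hLK, hKL'.mono_right hL'⟩

theorem cPair_iff_not_cSeparable {A M : Type} (C : Set (Set (List A))) (α : List A → M)
    (s t : M) : CPair C α s t ↔ ¬CSeparable C (α ⁻¹' {s}) (α ⁻¹' {t}) := by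
  simp only [CPair, CSeparable, disjoint_iff_inter_eq_empty]

theorem IsReg.isRegular {A : Type} {L : Set (List A)} (h : IsReg L) : Language.IsRegular L :=
  let ⟨σ, hσ, M, hM⟩ := h
  ⟨σ, hσ, M, Set.ext hM⟩

theorem FiniteInter.sInter_mem_of_finite {X : Type*} {C : Set (Set X)} (hC : FiniteInter C)
    {S : Set (Set X)} (hS : S.Finite) (hSC : S ⊆ C) : ⋂₀ S ∈ C := by
  simpa using hC.finiteInter_mem hS.toFinset (by simpa using hSC)

section Quotients

variable {A : Type*} {C : Set (Set (List A))}

theorem biInter_leftQuotient_mem (hC : FiniteInter C)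
    (hreg : ∀ K ∈ C, Language.IsRegular K) (hql : ∀ L ∈ C, ∀ u : List A, {w | u ++ w ∈ L} ∈ C)
    {K : Set (List A)} (hK : K ∈ C) (S : Set (List A)) :
    ⋂ u ∈ S, {w | u ++ w ∈ K} ∈ C := by
  rw [← sInter_image]
  refine hC.sInter_mem_of_finite ?_ (image_subset_iff.2 fun u _ => hql K hK u)
  exact (hreg K hK).finite_range_leftQuotient.subset (image_subset_range _ _)

theorem not_cSeparable_image2_append (hC : FiniteInter C)
    (hreg : ∀ K ∈ C, Language.IsRegular K) (hql : ∀ L ∈ C, ∀ u : List A, {w | u ++ w ∈ L} ∈ C)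
    (hqr : ∀ L ∈ C, ∀ u : List A, {w | w ++ u ∈ L} ∈ C) {L₁ L₁' L₂ L₂' : Set (List A)}
    (h₁ : ¬CSeparable C L₁ L₁') (h₂ : ¬CSeparable C L₂ L₂') :
    ¬CSeparable C (image2 (· ++ ·) L₁ L₂) (image2 (· ++ ·) L₁' L₂') := by
  rintro ⟨K, hKC, hLK, hKL'⟩
  obtain ⟨v, hvK, hvL₂'⟩ : ∃ v ∈ ⋂ u ∈ L₁, {w | u ++ w ∈ K}, v ∈ L₂' := by
    by_contra! h
    refine h₂ ⟨_, biInter_leftQuotient_mem hC hreg hql hKC L₁, ?_, disjoint_left.2 h⟩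
    exact fun w hw => mem_iInter₂.2 fun u hu => hLK (mem_image2_of_mem hu hw)
  refine h₁ ⟨{u | u ++ v ∈ K}, hqr K hKC v, fun u hu => mem_iInter₂.1 hvK u hu, ?_⟩
  exact disjoint_left.2 fun u hu hu' => disjoint_left.1 hKL' hu (mem_image2_of_mem hu' hvL₂')

end Quotients

theorem image2_append_preimage_subset {A M : Type} [Mul M] {α : List A → M}
    (hmul : ∀ u v : List A, α (u ++ v) = α u * α v) (s t : M) :
    image2 (· ++ ·) (α ⁻¹' {s}) (α ⁻¹' {t}) ⊆ α ⁻¹' {s * t} := by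
  rintro _ ⟨u, rfl, v, rfl, rfl⟩
  exact hmul u v

theorem stmt_4_general {A M : Type} [Monoid M]
    (C : Set (Set (List A)))
    (hreg : ∀ K ∈ C, IsReg K)
    (huniv : (Set.univ : Set (List A)) ∈ C)
    (hinter : ∀ K L : Set (List A), K ∈ C → L ∈ C → K ∩ L ∈ C)
    (hql : ∀ L ∈ C, ∀ u : List A, {w : List A | u ++ w ∈ L} ∈ C)
    (hqr : ∀ L ∈ C, ∀ u : List A, {w : List A | w ++ u ∈ L} ∈ C)
    (α : List A → M)
    (hmul : ∀ u v : List A, α (u ++ v) = α u * α v)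
    (s₁ t₁ s₂ t₂ : M) (h1 : CPair C α s₁ t₁) (h2 : CPair C α s₂ t₂) :
    CPair C α (s₁ * s₂) (t₁ * t₂) := by
  rw [cPair_iff_not_cSeparable] at h1 h2 ⊢
  have hC : FiniteInter C := ⟨huniv, fun K hK L hL => hinter K L hK hL⟩
  have hpair := not_cSeparable_image2_append hC (fun K hK => (hreg K hK).isRegular) hql hqr h1 h2
  exact fun hsep => hpair (hsep.mono (image2_append_preimage_subset hmul s₁ s₂)
    (image2_append_preimage_subset hmul t₁ t₂))

theorem stmt_4 {A M : Type} [Monoid M] [Fintype M]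
    (C : Set (Set (List A)))
    (hreg : ∀ K ∈ C, IsReg K)
    (hempty : (∅ : Set (List A)) ∈ C) (huniv : (Set.univ : Set (List A)) ∈ C)
    (hunion : ∀ K L : Set (List A), K ∈ C → L ∈ C → K ∪ L ∈ C)
    (hinter : ∀ K L : Set (List A), K ∈ C → L ∈ C → K ∩ L ∈ C)
    (hql : ∀ L ∈ C, ∀ u : List A, {w : List A | u ++ w ∈ L} ∈ C)
    (hqr : ∀ L ∈ C, ∀ u : List A, {w : List A | w ++ u ∈ L} ∈ C)
    (α : List A → M)
    (hone : α [] = 1) (hmul : ∀ u v : List A, α (u ++ v) = α u * α v)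
    (hsurj : Function.Surjective α)
    (s₁ t₁ s₂ t₂ : M) (h1 : CPair C α s₁ t₁) (h2 : CPair C α s₂ t₂) :
    CPair C α (s₁ * s₂) (t₁ * t₂) :=
  stmt_4_general C hreg huniv hinter hql hqr α hmul s₁ t₁ s₂ t₂ h1 h2
end

section
/- Let C be a quotienting lattice of regular languages, M a finite monoid, α : A* → M a surjective morphism. Suppose α satisfies: e ≤ ete for every C-pair (e,t) with e idempotent, where ≤ is a compatible order on M. Then for every idempotent e ∈ M there exists a language K_e ∈ C such that (1) for all u ∈ K_e, e ≤ e·α(u)·e, and (2) α⁻¹(e) ⊆ K_e. -/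
/-!
For every `t` such that `(s, t)` is not a `C`-pair, pick a language of `C` separating
`α⁻¹(s)` from `α⁻¹(t)`. Since `M` is finite, the intersection `K` of these separators lies in `C`;
it contains `α⁻¹(s)` and avoids every `α⁻¹(t)` with `(s, t)` not a `C`-pair, so `(s, α u)` is a
`C`-pair for every `u ∈ K`. For an idempotent `s = e` the hypothesis on `C`-pairs then gives
`e ≤ e α(u) e`.
-/

open Set

theorem iInter_mem_of_inter_mem {X ι : Type*} [Fintype ι] {C : Set (Set X)}
    (huniv : univ ∈ C) (hinter : ∀ K L : Set X, K ∈ C → L ∈ C → K ∩ L ∈ C)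
    {G : ι → Set X} (hG : ∀ i, G i ∈ C) : ⋂ i, G i ∈ C := by
  rw [← iInf_eq_iInter, ← Finset.inf_univ_eq_iInf]
  exact Finset.inf_mem C huniv (fun K hK L hL => hinter K L hK hL) _ _ fun i _ => hG i

section CPair

variable {A M : Type} {C : Set (Set (List A))} {α : List A → M}

theorem exists_separator_of_not_cPair (huniv : univ ∈ C) (s t : M) :
    ∃ K ∈ C, α ⁻¹' {s} ⊆ K ∧ (¬ CPair C α s t → K ∩ α ⁻¹' {t} = ∅) := by
  by_cases h : CPair C α s t
  · exact ⟨univ, huniv, subset_univ _, absurd h⟩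
  · obtain ⟨K, hK, hsub, hdisj⟩ := not_not.mp h
    exact ⟨K, hK, hsub, fun _ => hdisj⟩

theorem exists_mem_forall_cPair [Finite M] (huniv : univ ∈ C)
    (hinter : ∀ K L : Set (List A), K ∈ C → L ∈ C → K ∩ L ∈ C) (s : M) :
    ∃ K ∈ C, α ⁻¹' {s} ⊆ K ∧ ∀ u ∈ K, CPair C α s (α u) := by
  have := Fintype.ofFinite M
  choose G hGC hGs hGsep using exists_separator_of_not_cPair (α := α) huniv s
  refine ⟨⋂ t, G t, iInter_mem_of_inter_mem huniv hinter hGC, subset_iInter hGs, ?_⟩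
  intro u hu
  by_contra h
  have hmem : u ∈ G (α u) ∩ α ⁻¹' {α u} := ⟨mem_iInter.mp hu _, rfl⟩
  rwa [hGsep _ h] at hmem

end CPair

theorem stmt_5_general {A M : Type} [Monoid M] [Fintype M] [PartialOrder M]
    (C : Set (Set (List A)))
    (huniv : (Set.univ : Set (List A)) ∈ C)
    (hinter : ∀ K L : Set (List A), K ∈ C → L ∈ C → K ∩ L ∈ C)
    (α : List A → M)
    (heq : ∀ e t : M, e * e = e → CPair C α e t → e ≤ e * t * e) :
    ∀ e : M, e * e = e →
      ∃ K ∈ C, (∀ u ∈ K, e ≤ e * α u * e) ∧ α ⁻¹' {e} ⊆ K := by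
  intro e he
  obtain ⟨K, hK, hsub, hpair⟩ := exists_mem_forall_cPair (α := α) huniv hinter e
  exact ⟨K, hK, fun u hu => heq e _ he (hpair u hu), hsub⟩

theorem stmt_5 {A M : Type} [Monoid M] [Fintype M] [PartialOrder M]
    (hcomp : ∀ a b c d : M, a ≤ b → c ≤ d → a * c ≤ b * d)
    (C : Set (Set (List A)))
    (hreg : ∀ K ∈ C, IsReg K)
    (hempty : (∅ : Set (List A)) ∈ C) (huniv : (Set.univ : Set (List A)) ∈ C)
    (hunion : ∀ K L : Set (List A), K ∈ C → L ∈ C → K ∪ L ∈ C)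
    (hinter : ∀ K L : Set (List A), K ∈ C → L ∈ C → K ∩ L ∈ C)
    (hql : ∀ L ∈ C, ∀ u : List A, {w : List A | u ++ w ∈ L} ∈ C)
    (hqr : ∀ L ∈ C, ∀ u : List A, {w : List A | w ++ u ∈ L} ∈ C)
    (α : List A → M)
    (hone : α [] = 1) (hmul : ∀ u v : List A, α (u ++ v) = α u * α v)
    (hsurj : Function.Surjective α)
    (heq : ∀ e t : M, e * e = e → CPair C α e t → e ≤ e * t * e) :
    ∀ e : M, e * e = e →
      ∃ K ∈ C, (∀ u ∈ K, e ≤ e * α u * e) ∧ α ⁻¹' {e} ⊆ K :=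
  stmt_5_general C huniv hinter α heq
end

section
/- Let C be a finite quotienting lattice of languages over A and let L ∈ Pol(C), the polynomial closure of C. Then there exist natural numbers h, p ≥ 1 such that for all ℓ ≥ h and all words u, v, x, y with u ≤_C v: if x u^{pℓ+1} y ∈ L then x u^{pℓ} v u^{pℓ} y ∈ L. -/
/-- The polynomial closure of `C`: the smallest class containing `C` and closed under
union and marked concatenation. -/
inductive Pol {A : Type} (C : Set (Set (List A))) : Set (List A) → Prop
  | base (L : Set (List A)) (h : L ∈ C) : Pol C L
  | union (H L : Set (List A)) (hH : Pol C H) (hL : Pol C L) : Pol C (H ∪ L)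
  | marked (H L : Set (List A)) (a : A) (hH : Pol C H) (hL : Pol C L) :
      Pol C {w : List A | ∃ u ∈ H, ∃ v ∈ L, w = u ++ a :: v}

section
variable {A : Type}

lemma wpow_zero (u : List A) : wpow u 0 = [] := rfl

lemma wpow_add (u : List A) (m n : ℕ) : wpow u (m + n) = wpow u m ++ wpow u n := by
  simp only [wpow, List.replicate_add, List.flatten_append]

lemma wpow_one (u : List A) : wpow u 1 = u := by
  simp [wpow]

lemma wpow_succ (u : List A) (n : ℕ) : wpow u (n + 1) = u ++ wpow u n := by
  simp [wpow, List.replicate_succ]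

lemma wpow_add_one_add {u u₁ u₂ : List A} {a : A} (hu : u = u₁ ++ a :: u₂) (i j : ℕ) :
    wpow u (i + 1 + j) = wpow u i ++ u₁ ++ a :: (u₂ ++ wpow u j) := by
  simp [wpow_add, wpow_one, hu]

lemma cases_of_append_eq_append_cons {x z w₁ w₂ : List A} {a : A}
    (h : x ++ z = w₁ ++ a :: w₂) :
    (∃ x₂, x = w₁ ++ a :: x₂ ∧ w₂ = x₂ ++ z) ∨ (∃ z₁, z = z₁ ++ a :: w₂ ∧ w₁ = x ++ z₁) := by
  rcases List.append_eq_append_iff.1 h with ⟨z₁, hw₁, hz⟩ | ⟨c, hx, hc⟩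
  · exact Or.inr ⟨z₁, hz, hw₁⟩
  · rcases List.cons_eq_append_iff.1 hc with ⟨rfl, rfl⟩ | ⟨x₂, rfl, rfl⟩
    · exact Or.inr ⟨[], by simp, by simpa using hx.symm⟩
    · exact Or.inl ⟨x₂, hx, rfl⟩

lemma exists_of_wpow_eq_append_cons {u z₁ z₂ : List A} {a : A} {n : ℕ}
    (h : wpow u n = z₁ ++ a :: z₂) :
    ∃ i j u₁ u₂, n = i + 1 + j ∧ u = u₁ ++ a :: u₂ ∧
      z₁ = wpow u i ++ u₁ ∧ z₂ = u₂ ++ wpow u j := by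
  induction n generalizing z₁ with
  | zero => simp [wpow_zero] at h
  | succ n ih =>
    rw [wpow_succ] at h
    rcases cases_of_append_eq_append_cons h with ⟨u₂, hu, rfl⟩ | ⟨t, ht, rfl⟩
    · exact ⟨0, n, z₁, u₂, by omega, hu, by simp [wpow_zero], rfl⟩
    · obtain ⟨i, j, u₁, u₂, rfl, hu, rfl, rfl⟩ := ih ht
      exact ⟨i + 1, j, u₁, u₂, by omega, hu, by simp [wpow_succ], rfl⟩

lemma cases_of_append_wpow_append_eq_append_cons {x y u w₁ w₂ : List A} {a : A} {n : ℕ}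
    (h : x ++ wpow u n ++ y = w₁ ++ a :: w₂) :
    (∃ x₂, x = w₁ ++ a :: x₂ ∧ w₂ = x₂ ++ wpow u n ++ y) ∨
    (∃ i j u₁ u₂, n = i + 1 + j ∧ u = u₁ ++ a :: u₂ ∧
      w₁ = x ++ wpow u i ++ u₁ ∧ w₂ = u₂ ++ wpow u j ++ y) ∨
    (∃ y₁, y = y₁ ++ a :: w₂ ∧ w₁ = x ++ wpow u n ++ y₁) := by
  rw [List.append_assoc] at h
  rcases cases_of_append_eq_append_cons h with ⟨x₂, hx, rfl⟩ | ⟨t, ht, rfl⟩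
  · exact Or.inl ⟨x₂, hx, by simp⟩
  rcases cases_of_append_eq_append_cons ht with ⟨z₂, hz, rfl⟩ | ⟨y₁, hy, rfl⟩
  · obtain ⟨i, j, u₁, u₂, hn, hu, rfl, rfl⟩ := exists_of_wpow_eq_append_cons hz
    exact Or.inr (Or.inl ⟨i, j, u₁, u₂, hn, hu, by simp, by simp⟩)
  · exact Or.inr (Or.inr ⟨y₁, hy, by simp⟩)

variable {C : Set (Set (List A))} {u v w : List A}

lemma leC.trans (huv : leC C u v) (hvw : leC C v w) : leC C u w :=
  fun K hK hu => hvw K hK (huv K hK hu)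

lemma leC.append_left (hql : ∀ L ∈ C, ∀ u : List A, {w : List A | u ++ w ∈ L} ∈ C)
    (huv : leC C u v) (x : List A) : leC C (x ++ u) (x ++ v) :=
  fun K hK => huv _ (hql K hK x)

lemma leC.append_right (hqr : ∀ L ∈ C, ∀ u : List A, {w : List A | w ++ u ∈ L} ∈ C)
    (huv : leC C u v) (y : List A) : leC C (u ++ y) (v ++ y) :=
  fun K hK => huv _ (hqr K hK y)

lemma leC.append (hql : ∀ L ∈ C, ∀ u : List A, {w : List A | u ++ w ∈ L} ∈ C)
    (hqr : ∀ L ∈ C, ∀ u : List A, {w : List A | w ++ u ∈ L} ∈ C)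
    (huv : leC C u v) (x y : List A) : leC C (x ++ u ++ y) (x ++ v ++ y) :=
  (huv.append_left hql x).append_right hqr y

def cType (C : Set (Set (List A))) (w : List A) : Set (Set (List A)) := {K ∈ C | w ∈ K}

lemma leC_iff_cType_subset : leC C u v ↔ cType C u ⊆ cType C v :=
  ⟨fun huv _ hK => ⟨hK.1, huv _ hK.1 hK.2⟩, fun h _ hK hu => (h ⟨hK, hu⟩).2⟩

lemma cType_append_right (hqr : ∀ L ∈ C, ∀ u : List A, {w : List A | w ++ u ∈ L} ∈ C)
    (huv : cType C u = cType C v) (y : List A) : cType C (u ++ y) = cType C (v ++ y) := by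
  simp only [subset_antisymm_iff, ← leC_iff_cType_subset] at huv ⊢
  exact ⟨huv.1.append_right hqr y, huv.2.append_right hqr y⟩

lemma exists_cType_wpow_eq (hfin : C.Finite) :
    ∃ N, ∀ u : List A, ∃ i q, 0 < q ∧ i + q ≤ N ∧
      cType C (wpow u i) = cType C (wpow u (i + q)) := by
  refine ⟨hfin.powerset.toFinset.card, fun u => ?_⟩
  obtain ⟨k, hk, l, hl, hkl, heq⟩ := Finset.exists_ne_map_eq_of_card_lt_of_maps_to
    (s := Finset.range (hfin.powerset.toFinset.card + 1)) (by simp)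
    (f := fun k => cType C (wpow u k))
    (fun k _ => hfin.powerset.mem_toFinset.2 fun K hK => hK.1)
  simp only [Finset.mem_range] at hk hl
  rcases Nat.lt_or_gt_of_ne hkl with hlt | hlt
  · exact ⟨k, l - k, by omega, by omega, by rwa [Nat.add_sub_cancel' hlt.le]⟩
  · exact ⟨l, k - l, by omega, by omega, by rwa [Nat.add_sub_cancel' hlt.le, eq_comm]⟩

lemma cType_wpow_add_mul (hqr : ∀ L ∈ C, ∀ u : List A, {w : List A | w ++ u ∈ L} ∈ C)
    {i q k : ℕ} (h : cType C (wpow u i) = cType C (wpow u (i + q))) (hk : i ≤ k) (t : ℕ) :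
    cType C (wpow u k) = cType C (wpow u (k + q * t)) := by
  have shift : ∀ k, i ≤ k → cType C (wpow u k) = cType C (wpow u (k + q)) := by
    intro k hk
    obtain ⟨d, rfl⟩ := Nat.exists_eq_add_of_le hk
    rw [wpow_add, show i + d + q = i + q + d by omega, wpow_add]
    exact cType_append_right hqr h _
  induction t with
  | zero => rfl
  | succ t ih => rw [ih, shift _ (by omega), mul_add_one, add_assoc]

lemma exists_cType_wpow_eq_of_modEq (hfin : C.Finite)
    (hqr : ∀ L ∈ C, ∀ u : List A, {w : List A | w ++ u ∈ L} ∈ C) :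
    ∃ h p, 0 < p ∧ ∀ (u : List A) (m n : ℕ), h ≤ m → h ≤ n → m ≡ n [MOD p] →
      cType C (wpow u m) = cType C (wpow u n) := by
  obtain ⟨N, hN⟩ := exists_cType_wpow_eq hfin
  refine ⟨N, N.factorial, N.factorial_pos, fun u m n hm hn hmn => ?_⟩
  wlog hle : m ≤ n generalizing m n
  · exact (this n m hn hm hmn.symm (by omega)).symm
  obtain ⟨i, q, hq, hiq, hper⟩ := hN u
  obtain ⟨t, ht⟩ := (Nat.modEq_iff_dvd' hle).1 (hmn.of_dvd (Nat.dvd_factorial hq (by omega)))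
  rw [show n = m + q * t by omega]
  exact cType_wpow_add_mul hqr hper (by omega) t

/-- The exponents `r` and `s` are free above `n` and only fixed modulo `p`, so that when a marked
letter cuts the block `u^(n+1)`, the longer side can absorb the rest of the block into its exponent;
this is what makes the property stable under marked concatenation. -/
def Pumps (C : Set (Set (List A))) (L : Set (List A)) (h p : ℕ) : Prop :=
  ∀ ⦃u v : List A⦄, leC C u v → ∀ (x y : List A) (n r s : ℕ), h ≤ n → n ≤ r → n ≤ s →
    r + s ≡ n [MOD p] → x ++ wpow u (n + 1) ++ y ∈ L → x ++ wpow u r ++ v ++ wpow u s ++ y ∈ L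

variable {H K L : Set (List A)} {h p : ℕ}

lemma Pumps.mono {h' p' : ℕ} (hL : Pumps C L h p) (hh : h ≤ h') (hp : p ∣ p') :
    Pumps C L h' p' :=
  fun _ _ huv x y n r s hn hr hs hmod =>
    hL huv x y n r s (hh.trans hn) hr hs (hmod.of_dvd hp)

lemma pumps_of_mem (hfin : C.Finite)
    (hql : ∀ L ∈ C, ∀ u : List A, {w : List A | u ++ w ∈ L} ∈ C)
    (hqr : ∀ L ∈ C, ∀ u : List A, {w : List A | w ++ u ∈ L} ∈ C) (hK : K ∈ C) :
    ∃ h p, 0 < p ∧ Pumps C K h p := by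
  obtain ⟨h, p, hp, hper⟩ := exists_cType_wpow_eq_of_modEq hfin hqr
  refine ⟨h, p, hp, fun u v huv x y n r s hn hr hs hmod hx => ?_⟩
  have hpow : leC C (wpow u (n + 1)) (wpow u r ++ u ++ wpow u s) := by
    rw [show wpow u r ++ u ++ wpow u s = wpow u (r + s + 1) by
        rw [add_right_comm, wpow_add, wpow_add, wpow_one],
      leC_iff_cType_subset, hper u _ _ (by omega) (by omega) ((hmod.add_right 1).symm)]
  simpa using ((hpow.trans (huv.append hql hqr _ _)).append hql hqr x y) K hK (by simpa using hx)

lemma Pumps.union (hH : Pumps C H h p) (hK : Pumps C K h p) : Pumps C (H ∪ K) h p :=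
  fun _ _ huv x y n r s hn hr hs hmod hx =>
    hx.imp (hH huv x y n r s hn hr hs hmod) (hK huv x y n r s hn hr hs hmod)

lemma Pumps.marked (hH : Pumps C H h p) (hK : Pumps C K h p) (a : A) :
    Pumps C {w | ∃ w₁ ∈ H, ∃ w₂ ∈ K, w = w₁ ++ a :: w₂} (2 * h + 1) p := by
  rintro u v huv x y n r s hn hr hs hmod ⟨w₁, hw₁, w₂, hw₂, hw⟩
  rcases cases_of_append_wpow_append_eq_append_cons hw with
    ⟨x₂, rfl, rfl⟩ | ⟨i, j, u₁, u₂, hn', hu, rfl, rfl⟩ | ⟨y₁, rfl, rfl⟩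
  · exact ⟨w₁, hw₁, _, hK huv x₂ y n r s (by omega) hr hs hmod (by simpa using hw₂), by simp⟩
  · rcases le_total j i with hji | hij
    · obtain ⟨i, rfl⟩ : ∃ i', i = i' + 1 := ⟨i - 1, by omega⟩
      obtain ⟨s, rfl⟩ : ∃ s', s = s' + 1 + j := ⟨s - 1 - j, by omega⟩
      have hmod' : r + s ≡ i [MOD p] := Nat.ModEq.add_right_cancel' (1 + j) <| by
        rwa [show r + s + (1 + j) = r + (s + 1 + j) by ring, show i + (1 + j) = n by omega]
      refine ⟨_, hH huv x u₁ i r s (by omega) (by omega) (by omega) hmod' hw₁, _, hw₂, ?_⟩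
      simp [wpow_add_one_add hu]
    · obtain ⟨j, rfl⟩ : ∃ j', j = j' + 1 := ⟨j - 1, by omega⟩
      obtain ⟨r, rfl⟩ : ∃ r', r = i + 1 + r' := ⟨r - 1 - i, by omega⟩
      have hmod' : r + s ≡ j [MOD p] := Nat.ModEq.add_left_cancel' (i + 1) <| by
        rwa [show i + 1 + (r + s) = i + 1 + r + s by ring, show i + 1 + j = n by omega]
      refine ⟨_, hw₁, _, hK huv u₂ y j r s (by omega) (by omega) (by omega) hmod' hw₂, ?_⟩
      simp [wpow_add_one_add hu]
  · exact ⟨_, hH huv x y₁ n r s (by omega) hr hs hmod (by simpa using hw₁), w₂, hw₂, by simp⟩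

lemma Pumps.exists_common (hH : ∃ h p, 0 < p ∧ Pumps C H h p)
    (hK : ∃ h p, 0 < p ∧ Pumps C K h p) :
    ∃ h p, 0 < p ∧ Pumps C H h p ∧ Pumps C K h p := by
  obtain ⟨h₁, p₁, hp₁, hH⟩ := hH
  obtain ⟨h₂, p₂, hp₂, hK⟩ := hK
  exact ⟨max h₁ h₂, p₁ * p₂, Nat.mul_pos hp₁ hp₂,
    hH.mono (le_max_left _ _) (dvd_mul_right _ _), hK.mono (le_max_right _ _) (dvd_mul_left _ _)⟩

theorem Pol.exists_pumps (hfin : C.Finite)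
    (hql : ∀ L ∈ C, ∀ u : List A, {w : List A | u ++ w ∈ L} ∈ C)
    (hqr : ∀ L ∈ C, ∀ u : List A, {w : List A | w ++ u ∈ L} ∈ C) (hL : Pol C L) :
    ∃ h p, 0 < p ∧ Pumps C L h p := by
  induction hL with
  | base K hK => exact pumps_of_mem hfin hql hqr hK
  | union H K _ _ ihH ihK =>
    obtain ⟨h, p, hp, hH, hK⟩ := Pumps.exists_common ihH ihK
    exact ⟨h, p, hp, hH.union hK⟩
  | marked H K a _ _ ihH ihK =>
    obtain ⟨h, p, hp, hH, hK⟩ := Pumps.exists_common ihH ihK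
    exact ⟨2 * h + 1, p, hp, hH.marked hK a⟩

end

theorem stmt_6_general {A : Type} (C : Set (Set (List A)))
    (hfin : C.Finite)
    (hql : ∀ L ∈ C, ∀ u : List A, {w : List A | u ++ w ∈ L} ∈ C)
    (hqr : ∀ L ∈ C, ∀ u : List A, {w : List A | w ++ u ∈ L} ∈ C)
    (L : Set (List A)) (hL : Pol C L) :
    ∃ h p : ℕ, 1 ≤ h ∧ 1 ≤ p ∧
      ∀ ℓ : ℕ, h ≤ ℓ → ∀ u v x y : List A, leC C u v →
        x ++ wpow u (p * ℓ + 1) ++ y ∈ L →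
        x ++ wpow u (p * ℓ) ++ v ++ wpow u (p * ℓ) ++ y ∈ L := by
  obtain ⟨h, p, hp, hL⟩ := hL.exists_pumps hfin hql hqr
  refine ⟨h + 1, p, by omega, hp, fun ℓ hℓ u v x y huv hx =>
    hL huv x y (p * ℓ) _ _ ?_ le_rfl le_rfl ?_ hx⟩
  · exact (Nat.le_succ h).trans (hℓ.trans (Nat.le_mul_of_pos_left ℓ hp))
  · simp [Nat.ModEq, Nat.mul_mod_right]

theorem stmt_6 {A : Type} (C : Set (Set (List A)))
    (hfin : C.Finite)
    (hempty : (∅ : Set (List A)) ∈ C) (huniv : (Set.univ : Set (List A)) ∈ C)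
    (hunion : ∀ K L : Set (List A), K ∈ C → L ∈ C → K ∪ L ∈ C)
    (hinter : ∀ K L : Set (List A), K ∈ C → L ∈ C → K ∩ L ∈ C)
    (hql : ∀ L ∈ C, ∀ u : List A, {w : List A | u ++ w ∈ L} ∈ C)
    (hqr : ∀ L ∈ C, ∀ u : List A, {w : List A | w ++ u ∈ L} ∈ C)
    (L : Set (List A)) (hL : Pol C L) :
    ∃ h p : ℕ, 1 ≤ h ∧ 1 ≤ p ∧
      ∀ ℓ : ℕ, h ≤ ℓ → ∀ u v x y : List A, leC C u v →
        x ++ wpow u (p * ℓ + 1) ++ y ∈ L →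
        x ++ wpow u (p * ℓ) ++ v ++ wpow u (p * ℓ) ++ y ∈ L :=
  stmt_6_general C hfin hql hqr L hL
end

section
/- For any finite monoid M and any morphism α : A* → M, every word w ∈ A* admits an α-factorization forest of height at most 3|M| − 1 (Simon's Factorization Forest Theorem). -/
/-- `HasForest α w h` : the word `w` admits an `α`-factorization forest of height at
most `h`. Leaves are single letters or the empty word (height `0`); inner nodes are
binary, or idempotent nodes whose children all map to a common idempotent under `α`. -/
inductive HasForest {A M : Type} [Monoid M] (α : List A → M) : List A → ℕ → Prop
  | empty (h : ℕ) : HasForest α [] h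
  | letter (a : A) (h : ℕ) : HasForest α [a] h
  | binary (u v : List A) (h : ℕ) (hu : HasForest α u h) (hv : HasForest α v h) :
      HasForest α (u ++ v) (h + 1)
  | idem (e : M) (he : e * e = e) (ws : List (List A)) (h : ℕ)
      (hmaps : ∀ w ∈ ws, α w = e) (hrec : ∀ w ∈ ws, HasForest α w h) :
      HasForest α ws.flatten (h + 1)

/-! Induction on the number `d` of elements `J`-above `α w`. Cut `w` greedily into blocks whose
images are `J`-equivalent to `s = α w`; each block is a `J`-above prefix plus a letter, so by
induction it has height `3 (d - |J|)` (one more for the last block, which also absorbs the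
`J`-above remainder). In a finite monoid all prefix products at the cut points lie in the `R`-class
of `s`. Colour each cut point by its prefix product and the `R`-class of the next block: there are
at most `|J|` colours, and between two cut points with the same prefix product the word maps to the
idempotent of an `H`-class determined by the colour of the left one. The occurrences of one colour
therefore give an idempotent node, and removing the colours one at a time costs three levels each;
the last `-1` comes from the fact that if all `|J|` colours occur, one of them has prefix product
`s`. -/

theorem HasForest.mono {A M : Type} [Monoid M] {α : List A → M} {w : List A} {h h' : ℕ}
    (hw : HasForest α w h) (hh : h ≤ h') : HasForest α w h' := by
  induction hw generalizing h' with
  | empty => exact .empty _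
  | letter a => exact .letter a _
  | binary u v h _ _ ihu ihv =>
    obtain ⟨h', rfl⟩ : ∃ k, h' = k + 1 := ⟨h' - 1, by omega⟩
    exact .binary u v h' (ihu (by omega)) (ihv (by omega))
  | idem e he ws h hmaps _ ih =>
    obtain ⟨h', rfl⟩ : ∃ k, h' = k + 1 := ⟨h' - 1, by omega⟩
    exact .idem e he ws h' hmaps fun w hw => ih w hw (by omega)

theorem HasForest.append {A M : Type} [Monoid M] {α : List A → M} {u v : List A} {h h' : ℕ}
    (hu : HasForest α u h) (hv : HasForest α v h') : HasForest α (u ++ v) (max h h' + 1) :=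
  .binary u v _ (hu.mono (le_max_left h h')) (hv.mono (le_max_right h h'))

section FiniteMonoid

variable {M : Type*} [Monoid M] [Finite M]

theorem exists_pow_isIdempotentElem (x : M) : ∃ n, 0 < n ∧ IsIdempotentElem (x ^ n) := by
  obtain ⟨i, j, hne, hij⟩ := Finite.exists_ne_map_eq_of_infinite fun n : ℕ => x ^ (n + 1)
  wlog hlt : i < j generalizing i j
  · exact this j i hne.symm hij.symm (by omega)
  have hper : ∀ k t, i + 1 ≤ t → x ^ (t + k * (j - i)) = x ^ t := by
    intro k t ht
    induction k with
    | zero => simp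
    | succ k ih =>
      calc x ^ (t + (k + 1) * (j - i)) = x ^ (t + k * (j - i) - (i + 1)) * x ^ (j + 1) := by
            rw [← pow_add]; congr 1; rw [Nat.add_mul]; omega
        _ = x ^ (t + k * (j - i)) := by
            rw [← hij, ← pow_add]; congr 1; omega
        _ = x ^ t := ih
  refine ⟨(i + 1) * (j - i), Nat.mul_pos (by omega) (by omega), ?_⟩
  rw [IsIdempotentElem, ← pow_add]
  exact hper (i + 1) _ (Nat.le_mul_of_pos_right _ (by omega))

theorem exists_pow_isIdempotentElem_pair (x y : M) :
    ∃ n, 0 < n ∧ IsIdempotentElem (x ^ n) ∧ IsIdempotentElem (y ^ n) := by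
  obtain ⟨m, hm, hx⟩ := exists_pow_isIdempotentElem x
  obtain ⟨n, hn, hy⟩ := exists_pow_isIdempotentElem y
  refine ⟨m * n, Nat.mul_pos hm hn, ?_, ?_⟩
  · rw [pow_mul]; exact hx.pow n
  · rw [mul_comm, pow_mul]; exact hy.pow m

theorem exists_pow_mul_eq_self_and_mul_pow_eq_self {x b z : M} (h : x * b * z = b) :
    ∃ n, 0 < n ∧ x ^ n * b = b ∧ b * z ^ n = b := by
  have hpow : ∀ k, x ^ k * b * z ^ k = b := by
    intro k
    induction k with
    | zero => simp
    | succ k ih =>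
      calc x ^ (k + 1) * b * z ^ (k + 1) = x ^ k * (x * b * z) * z ^ k := by
            rw [pow_succ, pow_succ']; simp only [mul_assoc]
        _ = b := by rw [h, ih]
  obtain ⟨n, hn, hx, hz⟩ := exists_pow_isIdempotentElem_pair x z
  refine ⟨n, hn, ?_, ?_⟩
  · calc x ^ n * b = x ^ n * x ^ n * b * z ^ n := by
          conv_lhs => rw [← hpow n]
          simp only [mul_assoc]
      _ = b := by rw [hx.eq, hpow]
  · calc b * z ^ n = x ^ n * b * (z ^ n * z ^ n) := by rw [← mul_assoc, hpow]
      _ = b := by rw [hz.eq, hpow]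

end FiniteMonoid

namespace Green

variable {M : Type*} [Monoid M] {a b c s t x y q : M}

/-- Green's preorders: `leR a b` is `a ≤_R b` (`aM ⊆ bM`), `leL` is `≤_L`, `leJ` is `≤_J`. -/
def leR (a b : M) : Prop := ∃ u, a = b * u

def leL (a b : M) : Prop := ∃ u, a = u * b

def leJ (a b : M) : Prop := ∃ u v, a = u * b * v

def eqR (a b : M) : Prop := leR a b ∧ leR b a

def eqJ (a b : M) : Prop := leJ a b ∧ leJ b a

theorem leJ.refl (a : M) : leJ a a := ⟨1, 1, by simp⟩

theorem leR.trans : leR a b → leR b c → leR a c := by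
  rintro ⟨u, rfl⟩ ⟨v, rfl⟩
  exact ⟨v * u, mul_assoc _ _ _⟩

theorem leJ.trans : leJ a b → leJ b c → leJ a c := by
  rintro ⟨u, v, rfl⟩ ⟨x, y, rfl⟩
  exact ⟨u * x, y * v, by simp only [mul_assoc]⟩

theorem leR.leJ : leR a b → leJ a b := by
  rintro ⟨u, rfl⟩
  exact ⟨1, u, by simp⟩

theorem leL.leJ : leL a b → leJ a b := by
  rintro ⟨u, rfl⟩
  exact ⟨u, 1, by simp⟩

theorem eqR.refl (a : M) : eqR a a := ⟨⟨1, (mul_one a).symm⟩, ⟨1, (mul_one a).symm⟩⟩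

theorem eqJ.refl (a : M) : eqJ a a := ⟨.refl a, .refl a⟩

theorem eqJ.symm : eqJ a b → eqJ b a := And.symm

theorem eqJ.trans (h : eqJ a b) (h' : eqJ b c) : eqJ a c := ⟨h.1.trans h'.1, h'.2.trans h.2⟩

theorem eqR.symm : eqR a b → eqR b a := And.symm

theorem eqR.trans (h : eqR a b) (h' : eqR b c) : eqR a c := ⟨h.1.trans h'.1, h'.2.trans h.2⟩

theorem eqR.eqJ (h : eqR a b) : eqJ a b := ⟨h.1.leJ, h.2.leJ⟩

theorem eqR.mul_left (h : eqR a b) (x : M) : eqR (x * a) (x * b) := by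
  obtain ⟨⟨u, hu⟩, ⟨v, hv⟩⟩ := h
  exact ⟨⟨u, by rw [hu, mul_assoc]⟩, ⟨v, by rw [hv, mul_assoc]⟩⟩

theorem leJ_mul_left (x a : M) : leJ (x * a) a := ⟨x, 1, by simp⟩

theorem isIdempotentElem_of_mul_eq_self (hqx : q * x = q) (hxq : leL x q) :
    IsIdempotentElem x := by
  obtain ⟨u, hu⟩ := hxq
  calc x * x = u * (q * x) := by rw [hu, mul_assoc]
    _ = x := by rw [hqx, hu]

theorem eq_of_mul_eq_self (hqx : q * x = q) (hxq : leL x q) (hqy : q * b = q)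
    (hyx : leR b x) : b = x := by
  obtain ⟨u, hu⟩ := hxq
  obtain ⟨t, ht⟩ := hyx
  have hxb : x * b = x := by rw [hu, mul_assoc, hqy]
  calc b = x * x * t := by rw [(isIdempotentElem_of_mul_eq_self hqx ⟨u, hu⟩).eq, ht]
    _ = x := by rw [mul_assoc, ← ht, hxb]

open scoped Classical in
/-- For an `R`-class `ρ`, the idempotent of the `H`-class `ρ ∩ L(q)`, and `1` if there is none. -/
noncomputable def hIdempotent (q : M) (ρ : Finset M) : M :=
  if h : ∃ x ∈ ρ, q * x = q ∧ leL x q then h.choose else 1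

theorem isIdempotentElem_hIdempotent (q : M) (ρ : Finset M) :
    IsIdempotentElem (hIdempotent q ρ) := by
  unfold hIdempotent
  split_ifs with h
  · exact isIdempotentElem_of_mul_eq_self h.choose_spec.2.1 h.choose_spec.2.2
  · exact .one

theorem hIdempotent_eq {ρ : Finset M} (hρ : ∀ y ∈ ρ, ∀ z ∈ ρ, leR y z) (hx : x ∈ ρ)
    (hqx : q * x = q) (hxq : leL x q) : hIdempotent q ρ = x := by
  have h : ∃ x ∈ ρ, q * x = q ∧ leL x q := ⟨x, hx, hqx, hxq⟩
  obtain ⟨hyρ, hqy, -⟩ := h.choose_spec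
  rw [hIdempotent, dif_pos h]
  exact eq_of_mul_eq_self hqx hxq hqy (hρ _ hyρ x hx)

section Finite

variable [Finite M]

/-- Finite monoids are stable. -/
theorem leR.symm_of_leJ (hab : leR a b) (hba : Green.leJ b a) : leR b a := by
  obtain ⟨u, rfl⟩ := hab
  obtain ⟨x, y, hxy⟩ := hba
  obtain ⟨n, hn, -, hb⟩ :=
    exists_pow_mul_eq_self_and_mul_pow_eq_self (x := x) (b := b) (z := u * y)
      (by simp only [mul_assoc] at hxy ⊢; exact hxy.symm)
  obtain ⟨n, rfl⟩ := Nat.exists_eq_add_one_of_ne_zero hn.ne'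
  exact ⟨y * (u * y) ^ n, by
    conv_lhs => rw [← hb]
    rw [pow_succ']
    simp only [mul_assoc]⟩

theorem leL.symm_of_leJ (hab : leL a b) (hba : Green.leJ b a) : leL b a := by
  obtain ⟨u, rfl⟩ := hab
  obtain ⟨x, y, hxy⟩ := hba
  obtain ⟨n, hn, hb, -⟩ :=
    exists_pow_mul_eq_self_and_mul_pow_eq_self (x := x * u) (b := b) (z := y)
      (by simp only [mul_assoc] at hxy ⊢; exact hxy.symm)
  obtain ⟨n, rfl⟩ := Nat.exists_eq_add_one_of_ne_zero hn.ne'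
  exact ⟨(x * u) ^ n * x, by
    conv_lhs => rw [← hb]
    rw [pow_succ]
    simp only [mul_assoc]⟩

theorem leR.eqR_of_leJ (hab : leR a b) (hba : Green.leJ b a) : eqR a b := ⟨hab, hab.symm_of_leJ hba⟩

theorem eqR_and_leL_of_mul_eq_self (hqx : q * x = q) (hxt : leR x t) (htq : eqJ t q) :
    eqR x t ∧ leL x q := by
  have hqx' : leL q x := ⟨q, hqx.symm⟩
  exact ⟨hxt.eqR_of_leJ (htq.1.trans hqx'.leJ), hqx'.symm_of_leJ (hxt.leJ.trans htq.1)⟩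

end Finite

variable [Fintype M]

open scoped Classical in
noncomputable def rClass (t : M) : Finset M := Finset.univ.filter (eqR · t)

open scoped Classical in
noncomputable def jClass (t : M) : Finset M := Finset.univ.filter (eqJ · t)

open scoped Classical in
noncomputable def jUpset (t : M) : Finset M := Finset.univ.filter (leJ t ·)

theorem mem_rClass : y ∈ rClass t ↔ eqR y t := by simp [rClass]

theorem mem_jClass : y ∈ jClass t ↔ eqJ y t := by simp [jClass]

theorem mem_jUpset : y ∈ jUpset t ↔ leJ t y := by simp [jUpset]

theorem rClass_eq_of_eqR (h : eqR s t) : rClass s = rClass t := by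
  ext y
  simp only [mem_rClass]
  exact ⟨fun hy => hy.trans h, fun hy => hy.trans h.symm⟩

theorem card_jUpset_pos (t : M) : 0 < (jUpset t).card :=
  Finset.card_pos.2 ⟨t, mem_jUpset.2 (.refl t)⟩

theorem jClass_subset_jUpset (t : M) : jClass t ⊆ jUpset t :=
  fun _ hy => mem_jUpset.2 (mem_jClass.1 hy).2

theorem card_jUpset_add_card_jClass_le (hsx : leJ s x) (hxs : ¬ eqJ x s) :
    (jUpset x).card + (jClass s).card ≤ (jUpset s).card := by
  classical
  rw [← Finset.card_union_of_disjoint]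
  · refine Finset.card_le_card (Finset.union_subset ?_ (jClass_subset_jUpset s))
    exact fun y hy => mem_jUpset.2 (hsx.trans (mem_jUpset.1 hy))
  · refine Finset.disjoint_left.2 fun y hy hy' => hxs ⟨?_, hsx⟩
    exact (mem_jUpset.1 hy).trans (mem_jClass.1 hy').1

/-- Green's lemma: left multiplication by a suitable element embeds the `R`-class of `a` into
that of `b`. -/
theorem card_rClass_le (hab : eqJ a b) : (rClass a).card ≤ (rClass b).card := by
  obtain ⟨x, y, hxy⟩ := hab.2
  have hxa : eqR (x * a) b := (leR.eqR_of_leJ ⟨y, hxy⟩ ((leJ_mul_left x a).trans hab.1)).symm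
  obtain ⟨w, hw⟩ := leL.symm_of_leJ ⟨x, rfl⟩ (hab.1.trans ⟨1, y, by rw [hxy, one_mul]⟩)
  apply Finset.card_le_card_of_injOn (x * ·)
  · intro z hz
    simp only [Finset.mem_coe, mem_rClass] at hz ⊢
    exact (hz.mul_left x).trans hxa
  · intro z hz z' hz' hzz'
    simp only [Finset.mem_coe, mem_rClass] at hz hz'
    obtain ⟨u, hu⟩ := hz.1
    obtain ⟨u', hu'⟩ := hz'.1
    have hcancel : ∀ z u, z = a * u → w * (x * z) = z := by
      rintro z u rfl
      rw [← mul_assoc x a u, ← mul_assoc w (x * a) u, ← hw]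
    rw [← hcancel z u hu, ← hcancel z' u' hu']
    exact congrArg (w * ·) hzz'

open scoped Classical in
theorem card_rClass_mul_card_image_rClass_le :
    (rClass s).card * ((jClass s).image rClass).card ≤ (jClass s).card := by
  rw [Finset.card_eq_sum_card_image rClass (jClass s), mul_comm, ← smul_eq_mul]
  refine Finset.card_nsmul_le_sum _ _ _ fun ρ hρ => ?_
  obtain ⟨t, ht, rfl⟩ := Finset.mem_image.1 hρ
  refine (card_rClass_le (mem_jClass.1 ht).symm).trans (Finset.card_le_card fun y hy => ?_)
  have hyt := mem_rClass.1 hy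
  exact Finset.mem_filter.2 ⟨mem_jClass.2 (hyt.eqJ.trans (mem_jClass.1 ht)), rClass_eq_of_eqR hyt⟩

end Green

namespace FactorizationForest

open Green

section Segments

variable {A : Type*} (v : ℕ → List A) {a b c i : ℕ}

def seg (a b : ℕ) : List A := ((List.Ico a b).map v).flatten

theorem seg_self (a : ℕ) : seg v a a = [] := by simp [seg]

theorem seg_append (hab : a ≤ b) (hbc : b ≤ c) : seg v a b ++ seg v b c = seg v a c := by
  rw [seg, seg, ← List.flatten_append, ← List.map_append, List.Ico.append_consecutive hab hbc, seg]

theorem seg_succ_self (a : ℕ) : seg v a (a + 1) = v a := by simp [seg, List.Ico.succ_singleton]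

theorem seg_succ (hab : a ≤ b) : seg v a (b + 1) = seg v a b ++ v b := by
  rw [← seg_append v hab b.le_succ, seg_succ_self]

theorem seg_congr {v' : ℕ → List A} (h : ∀ i, a ≤ i → i < b → v i = v' i) :
    seg v a b = seg v' a b := by
  refine congrArg List.flatten (List.map_congr_left fun i hi => ?_)
  rw [List.Ico.mem] at hi
  exact h i hi.1 hi.2

theorem seg_update_succ (hab : a ≤ b) (u : List A) :
    seg (Function.update v b u) a (b + 1) = seg v a b ++ u := by
  rw [seg_succ _ hab, seg_congr _ fun i _ hi => Function.update_of_ne hi.ne _ _,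
    Function.update_self]

theorem infix_seg (hai : a ≤ i) (hib : i < b) : v i <:+: seg v a b := by
  rw [← seg_append v hai hib.le, ← seg_append v i.le_succ hib, seg_succ_self, ← List.append_assoc]
  exact List.infix_append _ _ _

end Segments

section Blocks

variable {A M : Type} [Monoid M] {α : List A → M} {v : ℕ → List A} {a b H : ℕ}

theorem hasForest_seg_of_isIdempotentElem {e : M} (he : IsIdempotentElem e)
    (hv : ∀ i, a ≤ i → i < b → α (v i) = e ∧ HasForest α (v i) H) :
    HasForest α (seg v a b) (H + 1) := by
  have hmem : ∀ u ∈ (List.Ico a b).map v, α u = e ∧ HasForest α u H := by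
    simp only [List.mem_map, List.Ico.mem]
    rintro _ ⟨i, ⟨hai, hib⟩, rfl⟩
    exact hv i hai hib
  exact .idem e he _ H (fun u hu => (hmem u hu).1) fun u hu => (hmem u hu).2

theorem exists_flatten_eq_seg (p : ℕ → Prop) (P : List A → Prop) {i l : ℕ} (hil : i ≤ l)
    (hi : p i) (hl : p l)
    (hP : ∀ x y, i ≤ x → x < y → y ≤ l → p x → p y → (∀ k, x < k → k < y → ¬ p k) →
      P (seg v x y)) :
    ∃ ws : List (List A), ws.flatten = seg v i l ∧ ∀ u ∈ ws, P u := by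
  have scan : ∀ y, i ≤ y → y ≤ l → ∃ x, i ≤ x ∧ x ≤ y ∧ p x ∧ (∀ k, x < k → k ≤ y → ¬ p k) ∧
      ∃ ws : List (List A), ws.flatten = seg v i x ∧ ∀ u ∈ ws, P u := by
    intro y hiy
    induction y, hiy using Nat.le_induction with
    | base => exact fun _ => ⟨i, le_rfl, le_rfl, hi, by omega, [], by simp [seg_self], by simp⟩
    | succ y hiy ih =>
      intro hyl
      obtain ⟨x, hix, hxy, hx, hnone, ws, hws, hwsP⟩ := ih (by omega)
      by_cases hy : p (y + 1)
      · refine ⟨y + 1, by omega, le_rfl, hy, by omega, ws ++ [seg v x (y + 1)], ?_, ?_⟩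
        · rw [List.flatten_append, hws, List.flatten_singleton, seg_append v hix (by omega)]
        · simp only [List.mem_append, List.mem_singleton]
          rintro u (hu | rfl)
          · exact hwsP u hu
          · exact hP x (y + 1) hix (by omega) hyl hx hy fun k h1 h2 => hnone k h1 (by omega)
      · refine ⟨x, hix, by omega, hx, fun k h1 h2 => ?_, ws, hws, hwsP⟩
        by_cases hk : k = y + 1
        · exact hk ▸ hy
        · exact hnone k h1 (by omega)
  obtain ⟨x, hix, hxl, hx, hnone, hws⟩ := scan l hil le_rfl
  obtain rfl : x = l := by
    by_contra hne
    exact hnone l (by omega) le_rfl hl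
  exact hws

theorem exists_first_last (p : ℕ → Prop) {c : ℕ} (hac : a < c) (hcb : c < b) (hc : p c) :
    ∃ i l, a < i ∧ i ≤ l ∧ l < b ∧ p i ∧ p l ∧ (∀ k, a < k → k < i → ¬ p k) ∧
      (∀ k, l < k → k < b → ¬ p k) := by
  classical
  have hex : ∃ i, a < i ∧ p i := ⟨c, hac, hc⟩
  have hic : Nat.find hex ≤ c := Nat.find_min' hex ⟨hac, hc⟩
  have hcl : c ≤ Nat.findGreatest (fun k => a < k ∧ p k) (b - 1) :=
    Nat.le_findGreatest (by omega) ⟨hac, hc⟩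
  have hl := Nat.findGreatest_spec (P := fun k => a < k ∧ p k) (by omega : c ≤ b - 1) ⟨hac, hc⟩
  refine ⟨_, _, (Nat.find_spec hex).1, hic.trans hcl,
    (Nat.findGreatest_le (b - 1)).trans_lt (by omega), (Nat.find_spec hex).2, hl.2,
    fun k hak hki hk => Nat.find_min hex hki ⟨hak, hk⟩, fun k hlk hkb hk => ?_⟩
  exact Nat.findGreatest_is_greatest hlk (by omega) ⟨hl.1.trans hlk, hk⟩

end Blocks

section Coloring

variable {A M K R : Type} [Monoid M] {α : List A → M} {v : ℕ → List A} {κ : ℕ → K} {ρ : ℕ → R}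
  {e : K → R → M} {a b c h h' H N : ℕ}

/-- One step of the induction on colours: cut `seg v a b` at the first and the last occurrence of
the colour of `c`; the consecutive occurrences in between delimit the children of an idempotent
node, which also absorbs the final segment when `κ c = κ b`. -/
theorem hasForest_seg_of_split (he : ∀ k r, IsIdempotentElem (e k r))
    (hmatch : ∀ i j, a < i → i < j → j ≤ b → κ i = κ j → α (seg v i j) = e (κ i) (ρ i))
    (hthin : ∀ x y, a ≤ x → x < y → y < b → (∀ k, x < k → k < y → (κ k, ρ k) ≠ (κ c, ρ c)) →
      HasForest α (seg v x y) H)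
    (hfull : ∀ x, a ≤ x → x < b → (∀ k, x < k → k < b → (κ k, ρ k) ≠ (κ c, ρ c)) →
      HasForest α (seg v x b) (max h' H))
    (hac : a < c) (hcb : c < b) :
    HasForest α (seg v a b) (max (h' + 2) (H + 3)) ∧
      (κ c = κ b → HasForest α (seg v a b) (max (h' + 2) (H + 2))) := by
  obtain ⟨i, l, hai, hil, hlb, hi, hl, hbefore, hafter⟩ :=
    exists_first_last (fun k => (κ k, ρ k) = (κ c, ρ c)) hac hcb rfl
  obtain ⟨ws, hws, hpieces⟩ := exists_flatten_eq_seg (fun k => (κ k, ρ k) = (κ c, ρ c))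
    (fun u => α u = e (κ c) (ρ c) ∧ HasForest α u H) hil hi hl
    fun x y hix hxy hyl hx hy hnone => by
      simp only [Prod.mk.injEq] at hx hy
      refine ⟨?_, hthin x y (by omega) hxy (by omega) hnone⟩
      rw [hmatch x y (by omega) hxy (by omega) (hx.1.trans hy.1.symm), hx.1, hx.2]
  have hP : HasForest α (seg v a i) H := hthin a i le_rfl hai (by omega) hbefore
  have hS : HasForest α (seg v l b) (max h' H) := hfull l (by omega) hlb hafter
  have hseg : seg v a i ++ seg v i b = seg v a b := seg_append v hai.le (by omega)
  constructor
  · have hI : HasForest α (seg v i l) (H + 1) :=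
      hws ▸ .idem _ (he _ _) ws H (fun u hu => (hpieces u hu).1) fun u hu => (hpieces u hu).2
    rw [← hseg, ← seg_append v hil hlb.le]
    exact (hP.append (hI.append hS)).mono (by omega)
  · intro hcb'
    have hSe : α (seg v l b) = e (κ c) (ρ c) := by
      simp only [Prod.mk.injEq] at hl
      rw [hmatch l b (by omega) hlb le_rfl (hl.1.trans hcb'), hl.1, hl.2]
    have hI : HasForest α (seg v i b) (max h' H + 1) := by
      have hnode := HasForest.idem (α := α) (e (κ c) (ρ c)) (he _ _) (ws ++ [seg v l b])
        (max h' H) ?_ ?_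
      · rwa [List.flatten_append, List.flatten_singleton, hws, seg_append v hil hlb.le] at hnode
      all_goals simp only [List.mem_append, List.mem_singleton]
      · rintro u (hu | rfl)
        exacts [(hpieces u hu).1, hSe]
      · rintro u (hu | rfl)
        exacts [(hpieces u hu).2.mono (le_max_right _ _), hS]
    rw [← hseg]
    exact (hP.append hI).mono (by omega)

/-- Each colour `(κ k, ρ k)` of a cut point costs three levels of the forest. -/
theorem hasForest_seg_of_coloring (he : ∀ k r, IsIdempotentElem (e k r))
    (hmatch : ∀ i j, 0 < i → i < j → j ≤ N → κ i = κ j → α (seg v i j) = e (κ i) (ρ i))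
    (hblock : ∀ i, i + 1 < N → HasForest α (v i) h) (Q : Finset (K × R)) :
    ∀ a b h', a < b → b ≤ N → h' ≤ h + 1 → HasForest α (v (b - 1)) h' →
      (∀ k, a < k → k < b → (κ k, ρ k) ∈ Q) →
      HasForest α (seg v a b) (max h' (h + 3 * Q.card)) ∧
        ∀ k, a < k → k < b → κ k = κ b →
          HasForest α (seg v a b) (max (h' + 2) (h + 3 * Q.card - 1)) := by
  induction Q using Finset.strongInduction with
  | H Q IH =>
  intro a b h' hab hbN hh' hlast hQ
  classical
  by_cases hb : b = a + 1
  · subst hb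
    rw [seg_succ_self]
    exact ⟨hlast.mono (le_max_left _ _), fun k hak hkb => by omega⟩
  have hsplit : ∀ c, a < c → c < b →
      HasForest α (seg v a b) (max (h' + 2) (h + 3 * Q.card)) ∧
        (κ c = κ b → HasForest α (seg v a b) (max (h' + 2) (h + 3 * Q.card - 1))) := by
    intro c hac hcb
    have hcQ := hQ c hac hcb
    have hcard : (Q.erase (κ c, ρ c)).card + 1 = Q.card := Finset.card_erase_add_one hcQ
    have IH' := IH _ (Finset.erase_ssubset hcQ)
    have hsub : ∀ x y, a ≤ x → y ≤ b → (∀ k, x < k → k < y → (κ k, ρ k) ≠ (κ c, ρ c)) →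
        ∀ k, x < k → k < y → (κ k, ρ k) ∈ Q.erase (κ c, ρ c) :=
      fun x y hax hyb hne k hxk hky =>
        Finset.mem_erase.2 ⟨hne k hxk hky, hQ k (by omega) (by omega)⟩
    have := hasForest_seg_of_split (H := h + 3 * (Q.erase (κ c, ρ c)).card) (h' := h') he
      (fun i j hai hij hjb => hmatch i j (by omega) hij (by omega))
      (fun x y hax hxy hyb hne => ((IH' x y h hxy (by omega) (by omega)
        (hblock (y - 1) (by omega)) (hsub x y hax hyb.le hne)).1).mono (by omega))
      (fun x hax hxb hne => (IH' x b h' hxb hbN hh' hlast (hsub x b hax le_rfl hne)).1)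
      hac hcb
    exact ⟨this.1.mono (by omega), fun hc => (this.2 hc).mono (by omega)⟩
  refine ⟨((hsplit (a + 1) (by omega) (by omega)).1).mono ?_, fun k hak hkb hk =>
    (hsplit k hak hkb).2 hk⟩
  have : 0 < Q.card := Finset.card_pos.2 ⟨_, hQ (a + 1) (by omega) (by omega)⟩
  omega

end Coloring

section Words

variable {A M : Type} [Monoid M] {α : List A → M}

theorem leJ_of_isInfix (hα : ∀ u w, α (u ++ w) = α u * α w) {u w : List A} (h : u <:+: w) :
    leJ (α w) (α u) := by
  obtain ⟨x, z, rfl⟩ := h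
  exact ⟨α x, α z, by rw [hα, hα]⟩

theorem hasForest_append_singleton {p : List A} (x : A) {H : ℕ}
    (hp : p = [] ∨ ∃ H' < H, HasForest α p H') : HasForest α (p ++ [x]) H := by
  rcases hp with rfl | ⟨H', hH', hpF⟩
  · exact .letter x H
  · exact (hpF.append (.letter x H')).mono (by omega)

theorem exists_seg_append_eq (P : List A → Prop) (w : List A) :
    ∃ (v : ℕ → List A) (n : ℕ) (r : List A), seg v 0 n ++ r = w ∧
      (∀ i < n, P (v i) ∧ ∃ p x, v i = p ++ [x] ∧ (p = [] ∨ ¬ P p)) ∧ (r = [] ∨ ¬ P r) := by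
  classical
  induction w using List.reverseRecOn with
  | nil => exact ⟨fun _ => [], 0, [], by simp [seg_self], by simp, .inl rfl⟩
  | append_singleton w x ih =>
    obtain ⟨v, n, r, hw, hv, hr⟩ := ih
    by_cases hP : P (r ++ [x])
    · refine ⟨Function.update v n (r ++ [x]), n + 1, [], ?_, fun i hi => ?_, .inl rfl⟩
      · rw [seg_update_succ _ n.zero_le, ← hw, List.append_nil, List.append_assoc]
      · rcases Nat.lt_succ_iff_lt_or_eq.1 hi with hi | rfl
        · rw [Function.update_of_ne hi.ne]
          exact hv i hi
        · rw [Function.update_self]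
          exact ⟨hP, r, x, rfl, hr⟩
    · exact ⟨v, n, r ++ [x], by rw [← hw, List.append_assoc], hv, .inr hP⟩

theorem exists_seg_eqJ (hα : ∀ u w, α (u ++ w) = α u * α w) {w : List A} (hw : w ≠ []) {H : ℕ}
    (habove : ∀ p, p <:+: w → ¬ eqJ (α p) (α w) → ∃ H' < H, HasForest α p H') :
    ∃ (v : ℕ → List A) (m : ℕ), seg v 0 (m + 1) = w ∧ (∀ i ≤ m, eqJ (α (v i)) (α w)) ∧
      (∀ i < m, HasForest α (v i) H) ∧ HasForest α (v m) (H + 1) := by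
  classical
  obtain ⟨v, n, r, hvr, hv, hr⟩ := exists_seg_append_eq (fun q => eqJ (α q) (α w)) w
  obtain ⟨m, rfl⟩ : ∃ m, n = m + 1 := by
    refine Nat.exists_eq_add_one.2 (Nat.pos_of_ne_zero fun hn => ?_)
    rw [hn, seg_self, List.nil_append] at hvr
    subst hvr
    exact hr.elim hw fun h => h (.refl _)
  have hinfix : ∀ i ≤ m, v i <:+: w := fun i hi =>
    (infix_seg v i.zero_le (Nat.lt_succ_of_le hi)).trans (hvr ▸ List.prefix_append _ _).isInfix
  have hblock : ∀ i ≤ m, HasForest α (v i) H := by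
    intro i hi
    obtain ⟨-, p, x, hpx, hp⟩ := hv i (Nat.lt_succ_of_le hi)
    rw [hpx]
    exact hasForest_append_singleton x <| hp.imp_right
      (habove p ((hpx ▸ List.prefix_append p [x]).isInfix.trans (hinfix i hi)))
  have hrF : HasForest α r H := by
    rcases hr with rfl | hr
    · exact .empty H
    · obtain ⟨H', hH', hrF⟩ := habove r (hvr ▸ List.suffix_append _ _).isInfix hr
      exact hrF.mono hH'.le
  refine ⟨Function.update v m (v m ++ r), m, ?_, fun i hi => ?_,
    fun i hi => Function.update_of_ne hi.ne (v m ++ r) v ▸ hblock i hi.le, ?_⟩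
  · rw [seg_update_succ _ m.zero_le, ← List.append_assoc, ← seg_succ _ m.zero_le, hvr]
  · rcases Nat.lt_or_eq_of_le hi with hi | rfl
    · rw [Function.update_of_ne hi.ne]
      exact (hv i (by omega)).1
    · rw [Function.update_self]
      refine ⟨?_, leJ_of_isInfix hα ?_⟩
      · exact (leR.leJ ⟨α r, hα _ _⟩).trans (hv i (by omega)).1.1
      · rw [← hvr, seg_succ _ i.zero_le, List.append_assoc]
        exact List.suffix_append _ _ |>.isInfix
  · rw [Function.update_self]
    exact ((hblock m le_rfl).append hrF).mono (by omega)

end Words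

section JClass

variable {A M : Type} [Monoid M] [Fintype M] {α : List A → M} {v : ℕ → List A} {s : M}
  {i j k n m H : ℕ}

theorem eqR_apply_seg_zero (hα : ∀ u w, α (u ++ w) = α u * α w) (hs : α (seg v 0 n) = s)
    (hJ : ∀ i < n, eqJ (α (v i)) s) (hk : 0 < k) (hkn : k ≤ n) : eqR (α (seg v 0 k)) s := by
  have hsk : leR s (α (seg v 0 k)) :=
    ⟨α (seg v k n), by rw [← hs, ← hα, seg_append v k.zero_le hkn]⟩
  have hks : leR (α (seg v 0 k)) (α (v 0)) :=
    ⟨α (seg v 1 k), by rw [← hα, ← seg_succ_self v 0, zero_add, seg_append v zero_le_one hk]⟩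
  exact (hsk.eqR_of_leJ (hks.leJ.trans (hJ 0 (by omega)).1)).symm

theorem apply_seg_eq_hIdempotent (hα : ∀ u w, α (u ++ w) = α u * α w) (hs : α (seg v 0 n) = s)
    (hJ : ∀ i < n, eqJ (α (v i)) s) (hi : 0 < i) (hij : i < j) (hjn : j ≤ n)
    (hκ : α (seg v 0 i) = α (seg v 0 j)) :
    α (seg v i j) = hIdempotent (α (seg v 0 i)) (rClass (α (v i))) := by
  have hqx : α (seg v 0 i) * α (seg v i j) = α (seg v 0 i) := by
    rw [← hα, seg_append v i.zero_le hij.le, hκ]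
  have hxt : leR (α (seg v i j)) (α (v i)) :=
    ⟨α (seg v (i + 1) j), by rw [← seg_succ_self v i, ← hα, seg_append v i.le_succ hij]⟩
  have htq : eqJ (α (v i)) (α (seg v 0 i)) :=
    (hJ i (by omega)).trans (eqR_apply_seg_zero hα hs hJ hi (by omega)).eqJ.symm
  obtain ⟨hR, hL⟩ := eqR_and_leL_of_mul_eq_self hqx hxt htq
  refine (hIdempotent_eq (fun y hy z hz => ?_) (mem_rClass.2 hR) hqx hL).symm
  exact (mem_rClass.1 hy).trans (mem_rClass.1 hz).symm |>.1

/-- Every prefix product is `R`-equivalent to `s`, so the colours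
`(prefix product, R-class of the next block)` number at most `|J|`, and if all of them occur then
some cut point has prefix product `s`. -/
theorem hasForest_seg_of_two_le_card_jClass (hα : ∀ u w, α (u ++ w) = α u * α w)
    (hs : α (seg v 0 (m + 1)) = s) (hJ : ∀ i ≤ m, eqJ (α (v i)) s)
    (hblock : ∀ i < m, HasForest α (v i) H) (hlast : HasForest α (v m) (H + 1))
    (hj : 2 ≤ (jClass s).card) :
    HasForest α (seg v 0 (m + 1)) (H + 3 * (jClass s).card - 1) := by
  classical
  have hJ' : ∀ i < m + 1, eqJ (α (v i)) s := fun i hi => hJ i (by omega)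
  set Q := (Finset.Ioo 0 (m + 1)).image fun k => (α (seg v 0 k), rClass (α (v k)))
  have hQ : Q ⊆ rClass s ×ˢ (jClass s).image rClass := by
    simp only [Q, Finset.subset_iff, Finset.mem_image, Finset.mem_Ioo, Finset.mem_product]
    rintro _ ⟨k, ⟨hk, hkm⟩, rfl⟩
    exact ⟨mem_rClass.2 (eqR_apply_seg_zero hα hs hJ' hk hkm.le),
      ⟨α (v k), mem_jClass.2 (hJ' k hkm), rfl⟩⟩
  have hX : (rClass s ×ˢ (jClass s).image rClass).card ≤ (jClass s).card := by
    rw [Finset.card_product]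
    exact card_rClass_mul_card_image_rClass_le
  have hcore := hasForest_seg_of_coloring isIdempotentElem_hIdempotent (N := m + 1) (h := H)
    (fun i j hi hij hjn hκ => apply_seg_eq_hIdempotent hα hs hJ' hi hij hjn hκ)
    (fun i hi => hblock i (by omega)) Q 0 (m + 1) (H + 1) m.succ_pos le_rfl (by omega)
    (by simpa using hlast) fun k hk hkm => Finset.mem_image_of_mem _ (Finset.mem_Ioo.2 ⟨hk, hkm⟩)
  by_cases hgood : ∃ k, 0 < k ∧ k < m + 1 ∧ α (seg v 0 k) = α (seg v 0 (m + 1))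
  · obtain ⟨k, hk, hkm, hκ⟩ := hgood
    have := (Finset.card_le_card hQ).trans hX
    exact (hcore.2 k hk hkm hκ).mono (by omega)
  · have hsQ : (s, rClass s) ∉ Q := by
      simp only [Q, Finset.mem_image, Finset.mem_Ioo, Prod.mk.injEq, not_exists, not_and]
      exact fun k hk hκ _ => hgood ⟨k, hk.1, hk.2, hκ.trans hs.symm⟩
    have hsX : (s, rClass s) ∈ rClass s ×ˢ (jClass s).image rClass :=
      Finset.mem_product.2
        ⟨mem_rClass.2 (.refl s), Finset.mem_image_of_mem _ (mem_jClass.2 (.refl s))⟩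
    have := (Finset.card_lt_card (Finset.ssubset_iff_subset_ne.2
      ⟨hQ, fun h => hsQ (h ▸ hsX)⟩)).trans_le hX
    exact hcore.1.mono (by omega)

theorem hasForest_seg_of_card_jClass_eq_one (hα : ∀ u w, α (u ++ w) = α u * α w)
    (hs : α (seg v 0 (m + 1)) = s) (hJ : ∀ i ≤ m, eqJ (α (v i)) s)
    (hblock : ∀ i < m, HasForest α (v i) H) (hlast : HasForest α (v m) (H + 1))
    (hj : (jClass s).card = 1) : HasForest α (seg v 0 (m + 1)) (H + 2) := by
  obtain ⟨x, hx⟩ := Finset.card_eq_one.1 hj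
  have hsingle : ∀ t, eqJ t s → t = s := fun t ht => by
    rw [Finset.eq_singleton_iff_unique_mem] at hx
    rw [hx.2 t (mem_jClass.2 ht), hx.2 s (mem_jClass.2 (.refl s))]
  rcases m with _ | m
  · rw [seg_succ_self]
    exact hlast.mono (by omega)
  have hv : ∀ i ≤ m + 1, α (v i) = s := fun i hi => hsingle _ (hJ i hi)
  have hss : IsIdempotentElem s := by
    have h01 : seg v 0 1 = v 0 := seg_succ_self v 0
    have h2 : α (seg v 0 2) = s * s := by
      rw [seg_succ v zero_le_one, h01, hα, hv 0 (by omega), hv 1 (by omega)]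
    refine hsingle _ ⟨leJ_mul_left s s, ⟨1, α (seg v 2 (m + 2)), ?_⟩⟩
    rw [one_mul, ← h2, ← hα, seg_append v (by omega) (by omega), hs]
  refine hasForest_seg_of_isIdempotentElem hss fun i _ hi => ⟨hv i (by omega), ?_⟩
  rcases Nat.lt_or_eq_of_le (Nat.lt_succ_iff.1 hi) with hi | rfl
  · exact hblock i hi |>.mono (by omega)
  · exact hlast

theorem hasForest_seg_of_eqJ (hα : ∀ u w, α (u ++ w) = α u * α w)
    (hs : α (seg v 0 (m + 1)) = s) (hJ : ∀ i ≤ m, eqJ (α (v i)) s)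
    (hblock : ∀ i < m, HasForest α (v i) H) (hlast : HasForest α (v m) (H + 1)) :
    HasForest α (seg v 0 (m + 1)) (H + 3 * (jClass s).card - 1) := by
  have hj : 0 < (jClass s).card := Finset.card_pos.2 ⟨s, mem_jClass.2 (.refl s)⟩
  rcases Nat.lt_or_eq_of_le hj with hj | hj
  · exact hasForest_seg_of_two_le_card_jClass hα hs hJ hblock hlast hj
  · exact (hasForest_seg_of_card_jClass_eq_one hα hs hJ hblock hlast hj.symm).mono (by omega)

theorem hasForest_of_card_jUpset_le (hα : ∀ u w, α (u ++ w) = α u * α w) (d : ℕ) :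
    ∀ w : List A, (jUpset (α w)).card ≤ d → HasForest α w (3 * d - 1) := by
  induction d using Nat.strong_induction_on with
  | _ d IH =>
  intro w hd
  rcases eq_or_ne w [] with rfl | hw
  · exact .empty _
  have hj : 0 < (jClass (α w)).card := Finset.card_pos.2 ⟨α w, mem_jClass.2 (.refl _)⟩
  have hjd := (Finset.card_le_card (jClass_subset_jUpset (α w))).trans hd
  obtain ⟨v, m, hseg, hJ, hblock, hlast⟩ := exists_seg_eqJ hα hw
    (H := 3 * (d - (jClass (α w)).card)) fun p hp hps => by
      have := card_jUpset_add_card_jClass_le (leJ_of_isInfix hα hp) hps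
      have := card_jUpset_pos (α p)
      exact ⟨_, by omega, IH _ (by omega) p le_rfl⟩
  have := hasForest_seg_of_eqJ hα (congrArg α hseg) hJ hblock hlast
  rw [hseg] at this
  exact this.mono (by omega)

end JClass

end FactorizationForest

theorem stmt_8_general {A M : Type} [Monoid M] [Fintype M] (α : List A → M)
    (hmul : ∀ u v : List A, α (u ++ v) = α u * α v) :
    ∀ w : List A, HasForest α w (3 * Fintype.card M - 1) :=
  fun w => FactorizationForest.hasForest_of_card_jUpset_le hmul _ w (Finset.card_le_univ _)

/-- Simon's Factorization Forest Theorem. -/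
theorem stmt_8 {A M : Type} [Monoid M] [Fintype M] (α : List A → M)
    (hone : α [] = 1) (hmul : ∀ u v : List A, α (u ++ v) = α u * α v) :
    ∀ w : List A, HasForest α w (3 * Fintype.card M - 1) :=
  stmt_8_general α hmul
end

section
/- Let C be a quotienting lattice of regular languages and L a regular language with syntactic morphism α_L : A* → M_L and syntactic order ≤_L. If L ∈ Pol(C), then s^{ω+1} ≤_L s^ω t s^ω for all C-pairs (s,t) ∈ M_L². -/
/-!
`C`-pairs are closed under products, so `(s^ω, s^(ω-1) t s^ω)` is a `C`-pair; as the languages of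
`C` are regular, it is witnessed by words `u`, `v` with `x u y ∈ K → x v y ∈ K` for all words
`x`, `y` and each of the finitely many `K ∈ C` from which `L` is built. By induction on `Pol C`
there is an `N` such that in any word `p u^N q ∈ L` one copy of `u` can be replaced by `v` without
leaving `L`. Since `s u^N` evaluates to `s^(ω+1)` and every word obtained from it by such a
replacement to `s^ω t s^ω`, this is the claimed inequality.
-/

open Set

variable {A M : Type}

structure IsQuotientingLattice (C : Set (Set (List A))) : Prop where
  empty_mem : (∅ : Set (List A)) ∈ C
  univ_mem : (Set.univ : Set (List A)) ∈ C
  union_mem : ∀ K L : Set (List A), K ∈ C → L ∈ C → K ∪ L ∈ C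
  inter_mem : ∀ K L : Set (List A), K ∈ C → L ∈ C → K ∩ L ∈ C
  leftQuot_mem : ∀ L ∈ C, ∀ u : List A, {w : List A | u ++ w ∈ L} ∈ C
  rightQuot_mem : ∀ L ∈ C, ∀ u : List A, {w : List A | w ++ u ∈ L} ∈ C

namespace IsQuotientingLattice

variable {C : Set (Set (List A))}

theorem sInter_mem (hC : IsQuotientingLattice C) {S : Set (Set (List A))} (hS : S.Finite)
    (hSC : S ⊆ C) : ⋂₀ S ∈ C :=
  InfClosed.sInf_mem (fun K hK L hL => hC.inter_mem K L hK hL) hS hC.univ_mem hSC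

theorem sUnion_mem (hC : IsQuotientingLattice C) {S : Set (Set (List A))} (hS : S.Finite)
    (hSC : S ⊆ C) : ⋃₀ S ∈ C :=
  SupClosed.sSup_mem (fun K hK L hL => hC.union_mem K L hK hL) hS hC.empty_mem hSC

theorem quot_mem (hC : IsQuotientingLattice C) {K : Set (List A)} (hK : K ∈ C) (p q : List A) :
    {w | p ++ w ++ q ∈ K} ∈ C := by
  convert hC.rightQuot_mem _ (hC.leftQuot_mem K hK p) q using 1
  ext w
  simp [List.append_assoc]

end IsQuotientingLattice

theorem IsReg.finite_range_quot {K : Set (List A)} (hK : IsReg K) :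
    (range fun pq : List A × List A => {w | pq.1 ++ w ++ pq.2 ∈ K}).Finite := by
  obtain ⟨σ, _, D, hD⟩ := hK
  refine (finite_range fun z : σ × Set σ => {w | D.evalFrom z.1 w ∈ z.2}).subset ?_
  rintro _ ⟨⟨p, q⟩, rfl⟩
  refine ⟨(D.eval p, {st | D.evalFrom st q ∈ D.accept}), ?_⟩
  ext w
  simp only [mem_ofPred_eq, ← hD, DFA.mem_accepts, DFA.eval, DFA.evalFrom_of_append]

section CPair

variable {C : Set (Set (List A))} {α : List A → M} {s t : M}

theorem CPair.exists_mem (h : CPair C α s t) {K : Set (List A)} (hK : K ∈ C)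
    (hsK : α ⁻¹' {s} ⊆ K) : ∃ w ∈ K, α w = t := by
  by_contra! hne
  exact h ⟨K, hK, hsK, eq_empty_iff_forall_notMem.2 fun w hw => hne w hw.1 hw.2⟩

theorem cPair_self (hsurj : Function.Surjective α) (s : M) : CPair C α s s := by
  rintro ⟨K, -, hsK, hK⟩
  obtain ⟨u, rfl⟩ := hsurj s
  exact hK.subset ⟨hsK rfl, rfl⟩

theorem CPair.mul [Mul M] {s' t' : M} (hC : IsQuotientingLattice C)
    (hregC : ∀ K ∈ C, IsReg K) (hmul : ∀ u v : List A, α (u ++ v) = α u * α v)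
    (h : CPair C α s t) (h' : CPair C α s' t') : CPair C α (s * s') (t * t') := by
  rintro ⟨K, hK, hsK, htK⟩
  have hX : ⋂₀ ((fun u => {w | w ++ u ∈ K}) '' (α ⁻¹' {s'})) ∈ C := by
    refine hC.sInter_mem ((hregC K hK).finite_range_quot.subset ?_)
      (image_subset_iff.2 fun u _ => hC.rightQuot_mem K hK u)
    rintro _ ⟨u, -, rfl⟩
    exact ⟨([], u), rfl⟩
  obtain ⟨w, hwX, hw⟩ := h.exists_mem hX fun w hw => by
    rintro _ ⟨u, hu, rfl⟩
    exact hsK (by simp_all)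
  obtain ⟨u, hu, hut⟩ :=
    h'.exists_mem (hC.leftQuot_mem K hK w) fun u hu => hwX _ ⟨u, hu, rfl⟩
  exact htK.subset ⟨hu, by simp [hmul, hw, hut]⟩

/-- The languages of `C` containing `u` cut out finitely many sets `⋂ {K ∈ F | u ∈ K} ∈ C`;
their union over `α u = s` must meet `α⁻¹ t`. -/
theorem CPair.exists_forall_mem_imp (h : CPair C α s t) (hC : IsQuotientingLattice C)
    {F : Set (Set (List A))} (hF : F.Finite) (hFC : F ⊆ C) :
    ∃ u v, α u = s ∧ α v = t ∧ ∀ K ∈ F, u ∈ K → v ∈ K := by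
  let cl : List A → Set (List A) := fun u => ⋂₀ {K ∈ F | u ∈ K}
  have hcl : ∀ u, cl u ∈ C := fun u =>
    hC.sInter_mem (hF.subset (sep_subset _ _)) ((sep_subset _ _).trans hFC)
  have hX : ⋃₀ (cl '' (α ⁻¹' {s})) ∈ C := by
    refine hC.sUnion_mem ((hF.finite_subsets.image sInter).subset ?_)
      (image_subset_iff.2 fun u _ => hcl u)
    rintro _ ⟨u, -, rfl⟩
    exact ⟨_, sep_subset _ _, rfl⟩
  obtain ⟨v, ⟨_, ⟨u, hu, rfl⟩, hv⟩, hvt⟩ :=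
    h.exists_mem hX fun u hu => ⟨cl u, mem_image_of_mem _ hu, fun K hK => hK.2⟩
  exact ⟨u, v, hu, hvt, fun K hK huK => hv K ⟨hK, huK⟩⟩

end CPair

def ContextLE (F : Set (Set (List A))) (u v : List A) : Prop :=
  ∀ K ∈ F, ∀ x y : List A, x ++ u ++ y ∈ K → x ++ v ++ y ∈ K

theorem CPair.exists_contextLE {C : Set (Set (List A))} {α : List A → M} {s t : M}
    (h : CPair C α s t) (hC : IsQuotientingLattice C) (hregC : ∀ K ∈ C, IsReg K)
    {F : Set (Set (List A))} (hF : F.Finite) (hFC : F ⊆ C) :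
    ∃ u v, α u = s ∧ α v = t ∧ ContextLE F u v := by
  obtain ⟨u, v, hu, hv, huv⟩ := h.exists_forall_mem_imp hC
    (hF.biUnion fun K hK => (hregC K (hFC hK)).finite_range_quot)
    (iUnion₂_subset fun K hK => range_subset_iff.2 fun pq => hC.quot_mem (hFC hK) pq.1 pq.2)
  exact ⟨u, v, hu, hv, fun K hK x y => huv _ (mem_biUnion hK ⟨(x, y), rfl⟩)⟩

theorem List.append_cons_eq_append {u v x y : List A} {a : A} (h : u ++ a :: v = x ++ y) :
    (∃ r, u = x ++ r ∧ y = r ++ a :: v) ∨ ∃ r, x = u ++ a :: r ∧ v = r ++ y := by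
  rcases List.append_eq_append_iff.1 h with ⟨_ | ⟨b, r⟩, hx, hy⟩ | ⟨r, hu, hy⟩
  · exact Or.inl ⟨[], by simp [hx], hy.symm⟩
  · simp only [List.cons_append, List.cons.injEq] at hy
    exact Or.inr ⟨r, by rw [hx, hy.1], hy.2⟩
  · exact Or.inl ⟨r, hu, hy⟩

def ReplacesPower (L : Set (List A)) (F : Set (Set (List A))) (N : ℕ) : Prop :=
  ∀ u v, ContextLE F u v → ∀ p q : List A, p ++ (List.replicate N u).flatten ++ q ∈ L →
    ∃ c d, c + d + 1 = N ∧
      p ++ (List.replicate c u).flatten ++ v ++ (List.replicate d u).flatten ++ q ∈ L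

namespace ReplacesPower

variable {L H : Set (List A)} {F F' : Set (Set (List A))} {N N' : ℕ}

theorem mono_family (h : ReplacesPower L F N) (hF : F ⊆ F') : ReplacesPower L F' N :=
  fun u v huv => h u v fun K hK => huv K (hF hK)

theorem mono_exponent (h : ReplacesPower L F N) (hN : N ≤ N') : ReplacesPower L F N' := by
  intro u v huv p q hmem
  obtain ⟨k, rfl⟩ := Nat.exists_eq_add_of_le hN
  obtain ⟨c, d, hcd, hmem⟩ :=
    h u v huv p _ (by simpa only [List.replicate_add, List.flatten_append, List.append_assoc]
      using hmem)
  exact ⟨c, d + k, by omega,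
    by simpa only [List.replicate_add, List.flatten_append, List.append_assoc] using hmem⟩

theorem singleton (L : Set (List A)) : ReplacesPower L {L} 1 := fun u v huv p q hmem =>
  ⟨0, 0, rfl, by simpa using huv L rfl p q (by simpa using hmem)⟩

theorem union (hH : ReplacesPower H F N) (hL : ReplacesPower L F N) :
    ReplacesPower (H ∪ L) F N := by
  rintro u v huv p q (hmem | hmem)
  · obtain ⟨c, d, hcd, hmem⟩ := hH u v huv p q hmem
    exact ⟨c, d, hcd, Or.inl hmem⟩
  · obtain ⟨c, d, hcd, hmem⟩ := hL u v huv p q hmem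
    exact ⟨c, d, hcd, Or.inr hmem⟩

/-- The marked letter leaves either the first `N` copies of `u` inside the `H`-factor or the last
`N'` copies inside the `L`-factor. -/
theorem marked (hH : ReplacesPower H F N) (hL : ReplacesPower L F N') (a : A) :
    ReplacesPower {w | ∃ u ∈ H, ∃ v ∈ L, w = u ++ a :: v} F (N + N') := by
  rintro U V hUV p q ⟨u, hu, v, hv, huv⟩
  have hsplit : u ++ a :: v = (p ++ (List.replicate N U).flatten) ++
      ((List.replicate N' U).flatten ++ q) := by
    rw [← huv, List.replicate_add, List.flatten_append]
    simp only [List.append_assoc]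
  rcases List.append_cons_eq_append hsplit with ⟨r, rfl, hr⟩ | ⟨r, hr, rfl⟩
  · obtain ⟨c, d, hcd, hmem⟩ := hH U V hUV p r hu
    refine ⟨c, d + N', by omega, _, hmem, v, hv, ?_⟩
    simp only [List.replicate_add, List.flatten_append, List.append_assoc, hr]
  · obtain ⟨c, d, hcd, hmem⟩ := hL U V hUV r q (by simpa using hv)
    refine ⟨N + c, d, by omega, u, hu, _, hmem, ?_⟩
    rw [List.replicate_add, List.flatten_append, ← List.append_assoc p, hr]
    simp

end ReplacesPower

theorem Pol.exists_replacesPower {C : Set (Set (List A))} {L : Set (List A)} (hL : Pol C L) :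
    ∃ F : Set (Set (List A)), F.Finite ∧ F ⊆ C ∧ ∃ N, 0 < N ∧ ReplacesPower L F N := by
  induction hL with
  | base L hL => exact ⟨{L}, finite_singleton L, singleton_subset_iff.2 hL, 1, one_pos,
      ReplacesPower.singleton L⟩
  | union H L _ _ ihH ihL =>
    obtain ⟨F, hF, hFC, N, hN, hH⟩ := ihH
    obtain ⟨F', hF', hFC', N', -, hL⟩ := ihL
    exact ⟨F ∪ F', hF.union hF', union_subset hFC hFC', N + N', by omega,
      ((hH.mono_family subset_union_left).mono_exponent (N.le_add_right N')).union
        ((hL.mono_family subset_union_right).mono_exponent (N'.le_add_left N))⟩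
  | marked H L a _ _ ihH ihL =>
    obtain ⟨F, hF, hFC, N, hN, hH⟩ := ihH
    obtain ⟨F', hF', hFC', N', -, hL⟩ := ihL
    exact ⟨F ∪ F', hF.union hF', union_subset hFC hFC', N + N', by omega,
      (hH.mono_family subset_union_left).marked (hL.mono_family subset_union_right) a⟩

theorem map_flatten_replicate [Monoid M] {α : List A → M} (hone : α [] = 1)
    (hmul : ∀ u v : List A, α (u ++ v) = α u * α v) (u : List A) (k : ℕ) :
    α (List.replicate k u).flatten = α u ^ k := by
  induction k with
  | zero => simpa using hone
  | succ k ih => rw [List.replicate_succ, List.flatten_cons, hmul, ih, pow_succ']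

theorem mul_pow_pow_mul_pow_sub_one [Monoid M] {s : M} {n : ℕ} (hn : n ≠ 0)
    (he : IsIdempotentElem (s ^ n)) (c : ℕ) : s * (s ^ n) ^ c * s ^ (n - 1) = s ^ n := by
  rw [← pow_mul, ← pow_succ', ← pow_add, ← he.pow_succ_eq c, ← pow_mul]
  congr 1
  rw [Nat.mul_succ]
  omega

theorem stmt_10_general {A M : Type} [Monoid M] [PartialOrder M]
    (C : Set (Set (List A)))
    (hregC : ∀ K ∈ C, IsReg K)
    (hempty : (∅ : Set (List A)) ∈ C) (huniv : (Set.univ : Set (List A)) ∈ C)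
    (hunion : ∀ K L : Set (List A), K ∈ C → L ∈ C → K ∪ L ∈ C)
    (hinter : ∀ K L : Set (List A), K ∈ C → L ∈ C → K ∩ L ∈ C)
    (hql : ∀ L ∈ C, ∀ u : List A, {w : List A | u ++ w ∈ L} ∈ C)
    (hqr : ∀ L ∈ C, ∀ u : List A, {w : List A | w ++ u ∈ L} ∈ C)
    (L : Set (List A))
    -- `α : A* → M` is the syntactic morphism of `L` and `≤` its syntactic order
    (α : List A → M)
    (hone : α [] = 1) (hmul : ∀ u v : List A, α (u ++ v) = α u * α v)
    (hsurj : Function.Surjective α)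
    (hsynt : ∀ u v : List A,
      α u ≤ α v ↔ ∀ x y : List A, x ++ u ++ y ∈ L → x ++ v ++ y ∈ L)
    (hL : Pol C L) :
    ∀ n : ℕ, 1 ≤ n → (∀ x : M, x ^ n * x ^ n = x ^ n) →
      ∀ s t : M, CPair C α s t → s ^ (n + 1) ≤ s ^ n * t * s ^ n := by
  intro n hn hid s t hst
  have hC : IsQuotientingLattice C := ⟨hempty, huniv, hunion, hinter, hql, hqr⟩
  have he : IsIdempotentElem (s ^ n) := hid s
  have hpair : CPair C α (s ^ n) (s ^ (n - 1) * t * s ^ n) := by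
    have h := ((cPair_self hsurj (s ^ (n - 1))).mul hC hregC hmul hst).mul hC hregC hmul
      (cPair_self hsurj (s ^ n))
    rwa [pow_sub_one_mul (by omega), he.eq] at h
  obtain ⟨F, hF, hFC, N, hN, hrepl⟩ := hL.exists_replacesPower
  obtain ⟨U, V, hU, hV, hUV⟩ := hpair.exists_contextLE hC hregC hF hFC
  obtain ⟨a, rfl⟩ := hsurj s
  have hpow := map_flatten_replicate hone hmul U
  have hval : ∀ c d, α (a ++ (List.replicate c U).flatten ++ V ++ (List.replicate d U).flatten)
      = α a ^ n * t * α a ^ n := fun c d => by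
    calc α (a ++ (List.replicate c U).flatten ++ V ++ (List.replicate d U).flatten)
        = (α a * (α a ^ n) ^ c * α a ^ (n - 1)) * t * (α a ^ n * (α a ^ n) ^ d) := by
          simp only [hmul, hpow, hU, hV, mul_assoc]
      _ = α a ^ n * t * α a ^ n := by
          rw [mul_pow_pow_mul_pow_sub_one (by omega) he, ← pow_succ', he.pow_succ_eq]
  have hlhs : α (a ++ (List.replicate N U).flatten) = α a ^ (n + 1) := by
    rw [hmul, hpow, hU, he.pow_eq (by omega), pow_succ']
  rw [← hlhs, ← hval 0 0]
  refine (hsynt _ _).2 fun x y hxy => ?_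
  obtain ⟨c, d, -, hmem⟩ :=
    hrepl U V hUV (x ++ a) y (by simpa only [List.append_assoc] using hxy)
  exact (hsynt _ _).1 ((hval c d).trans (hval 0 0).symm).le x y
    (by simpa only [List.append_assoc] using hmem)

theorem stmt_10 {A M : Type} [Monoid M] [Fintype M] [PartialOrder M]
    (hcomp : ∀ a b c d : M, a ≤ b → c ≤ d → a * c ≤ b * d)
    (C : Set (Set (List A)))
    (hregC : ∀ K ∈ C, IsReg K)
    (hempty : (∅ : Set (List A)) ∈ C) (huniv : (Set.univ : Set (List A)) ∈ C)
    (hunion : ∀ K L : Set (List A), K ∈ C → L ∈ C → K ∪ L ∈ C)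
    (hinter : ∀ K L : Set (List A), K ∈ C → L ∈ C → K ∩ L ∈ C)
    (hql : ∀ L ∈ C, ∀ u : List A, {w : List A | u ++ w ∈ L} ∈ C)
    (hqr : ∀ L ∈ C, ∀ u : List A, {w : List A | w ++ u ∈ L} ∈ C)
    (L : Set (List A)) (hregL : IsReg L)
    -- `α : A* → M` is the syntactic morphism of `L` and `≤` its syntactic order
    (α : List A → M)
    (hone : α [] = 1) (hmul : ∀ u v : List A, α (u ++ v) = α u * α v)
    (hsurj : Function.Surjective α)
    (hsynt : ∀ u v : List A,
      α u ≤ α v ↔ ∀ x y : List A, x ++ u ++ y ∈ L → x ++ v ++ y ∈ L)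
    (hL : Pol C L) :
    ∀ n : ℕ, 1 ≤ n → (∀ x : M, x ^ n * x ^ n = x ^ n) →
      ∀ s t : M, CPair C α s t → s ^ (n + 1) ≤ s ^ n * t * s ^ n :=
  stmt_10_general C hregC hempty huniv hunion hinter hql hqr L α hone hmul hsurj hsynt hL
end

section
/- Let C be a lattice of languages, M a finite monoid, α : A* → M surjective. For any F ⊆ M: α⁻¹(F) ∈ C if and only if F is an upper set for the saturated C-pair relation (i.e., s ∈ F and (s,t) a saturated C-pair imply t ∈ F). -/
/-!
If `α⁻¹(F) ∈ C` then `F` itself separates any `s ∈ F` from any `t ∉ F`, so no such pair is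
saturated. Conversely, if `F` is closed upwards under saturated pairs, then for `s ∈ F` and
`r ∉ F` some `α⁻¹(G_{s,r}) ∈ C` separates `α⁻¹(s)` from `α⁻¹(r)`, and
`α⁻¹(F) = ⋃_{s ∈ F} ⋂_{r ∉ F} α⁻¹(G_{s,r})`, a finite combination because `M` is finite.
-/

/-- `(s,t)` is a saturated `C`-pair for `α`. -/
def SatCPair {A M : Type} (C : Set (Set (List A))) (α : List A → M) (s t : M) : Prop :=
  ¬ ∃ F : Set M, α ⁻¹' F ∈ C ∧ α ⁻¹' {s} ⊆ α ⁻¹' F ∧ α ⁻¹' F ∩ α ⁻¹' {t} = ∅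

section SetFamily

variable {ι X : Type*} (C : Set (Set X))

lemma biUnion_mem_of_finite (hempty : (∅ : Set X) ∈ C)
    (hunion : ∀ K L : Set X, K ∈ C → L ∈ C → K ∪ L ∈ C)
    {I : Set ι} (hI : I.Finite) (f : ι → Set X) (hf : ∀ i ∈ I, f i ∈ C) :
    (⋃ i ∈ I, f i) ∈ C := by
  have := Finset.sup_mem C hempty (fun K hK L hL => hunion K L hK hL) hI.toFinset f
    (by simpa using hf)
  simpa [Finset.sup_set_eq_biUnion] using this

lemma biInter_mem_of_finite (huniv : (Set.univ : Set X) ∈ C)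
    (hinter : ∀ K L : Set X, K ∈ C → L ∈ C → K ∩ L ∈ C)
    {I : Set ι} (hI : I.Finite) (f : ι → Set X) (hf : ∀ i ∈ I, f i ∈ C) :
    (⋂ i ∈ I, f i) ∈ C := by
  have := Finset.inf_mem C huniv (fun K hK L hL => hinter K L hK hL) hI.toFinset f
    (by simpa using hf)
  simpa [Finset.inf_set_eq_iInter] using this

end SetFamily

lemma preimage_eq_biUnion_biInter_of_separating {X M : Type*} (α : X → M) (F : Set M)
    (H : M → M → Set X) (hsub : ∀ s ∈ F, ∀ r ∉ F, α ⁻¹' {s} ⊆ H s r)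
    (hdisj : ∀ s ∈ F, ∀ r ∉ F, H s r ∩ α ⁻¹' {r} = ∅) :
    α ⁻¹' F = ⋃ s ∈ F, ⋂ r ∈ Fᶜ, H s r := by
  ext x
  simp only [Set.mem_preimage, Set.mem_iUnion, Set.mem_iInter, Set.mem_compl_iff, exists_prop]
  refine ⟨fun hx => ⟨α x, hx, fun r hr => hsub _ hx r hr rfl⟩, ?_⟩
  rintro ⟨s, hs, hxH⟩
  by_contra hx
  exact (hdisj s hs _ hx).subset ⟨hxH _ hx, rfl⟩

lemma SatCPair.mem_of_preimage_mem {A M : Type} {C : Set (Set (List A))} {α : List A → M}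
    {F : Set M} (hF : α ⁻¹' F ∈ C) {s t : M} (hs : s ∈ F) (hst : SatCPair C α s t) : t ∈ F := by
  by_contra ht
  exact hst ⟨F, hF, fun x (hx : α x = s) => show α x ∈ F from hx ▸ hs,
    Set.eq_empty_iff_forall_notMem.2 fun x ⟨(hxF : α x ∈ F), (hxt : α x = t)⟩ => ht (hxt ▸ hxF)⟩

theorem stmt_15_general {A M : Type} [Fintype M]
    (C : Set (Set (List A)))
    (hempty : (∅ : Set (List A)) ∈ C) (huniv : (Set.univ : Set (List A)) ∈ C)
    (hunion : ∀ K L : Set (List A), K ∈ C → L ∈ C → K ∪ L ∈ C)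
    (hinter : ∀ K L : Set (List A), K ∈ C → L ∈ C → K ∩ L ∈ C)
    (α : List A → M)
    (F : Set M) :
    α ⁻¹' F ∈ C ↔ (∀ s ∈ F, ∀ t : M, SatCPair C α s t → t ∈ F) := by
  refine ⟨fun hF s hs t => SatCPair.mem_of_preimage_mem hF hs, fun hup => ?_⟩
  have hsep : ∀ s ∈ F, ∀ r ∉ F, ∃ G : Set M,
      α ⁻¹' G ∈ C ∧ α ⁻¹' {s} ⊆ α ⁻¹' G ∧ α ⁻¹' G ∩ α ⁻¹' {r} = ∅ :=
    fun s hs r hr => not_not.mp (mt (hup s hs r) hr)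
  choose! G hGC hGsub hGdisj using hsep
  rw [preimage_eq_biUnion_biInter_of_separating α F (fun s r => α ⁻¹' G s r) hGsub hGdisj]
  exact biUnion_mem_of_finite C hempty hunion F.toFinite _ fun s hs =>
    biInter_mem_of_finite C huniv hinter Fᶜ.toFinite _ fun r hr => hGC s hs r hr

theorem stmt_15 {A M : Type} [Monoid M] [Fintype M]
    (C : Set (Set (List A)))
    (hempty : (∅ : Set (List A)) ∈ C) (huniv : (Set.univ : Set (List A)) ∈ C)
    (hunion : ∀ K L : Set (List A), K ∈ C → L ∈ C → K ∪ L ∈ C)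
    (hinter : ∀ K L : Set (List A), K ∈ C → L ∈ C → K ∩ L ∈ C)
    (α : List A → M)
    (hone : α [] = 1) (hmul : ∀ u v : List A, α (u ++ v) = α u * α v)
    (hsurj : Function.Surjective α)
    (F : Set M) :
    α ⁻¹' F ∈ C ↔ (∀ s ∈ F, ∀ t : M, SatCPair C α s t → t ∈ F) :=
  stmt_15_general C hempty huniv hunion hinter α F
end

section
/- Let C be a lattice of languages, M a finite monoid, α : A* → M surjective. Then (s,t) is a saturated C-pair if and only if there exist n ∈ ℕ and r₀, …, r_{n+1} ∈ M with r₀ = s, r_{n+1} = t, and (r_i, r_{i+1}) a C-pair for each i ≤ n. In other words, the saturated C-pair relation is the reflexive-transitive closure of the C-pair relation. -/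
/-!
Saturated `C`-pairs form a transitive relation containing the `C`-pairs, which gives one
direction. Conversely, the set `F` of elements reachable from `s` by `C`-pair steps is closed
under `C`-pair successors. Choosing, for `u ∈ F` and `v ∉ F`, some `H u v ∈ C` separating
`α⁻¹(u)` from `α⁻¹(v)`, we get `α⁻¹(F) = ⋃_{u ∈ F} ⋂_{v ∉ F} H u v ∈ C` because `M` is finite,
so a saturated pair `(s, t)` forces `t ∈ F`. Chains have at least one step; the case `t = s` is
covered since `(s, s)` is a `C`-pair as soon as `α⁻¹(s)` is nonempty.
-/

open Set Relation

namespace Relation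

theorem transGen_iff_exists_seq {β : Type*} {r : β → β → Prop} {a b : β} :
    TransGen r a b ↔
      ∃ (n : ℕ) (f : ℕ → β), f 0 = a ∧ f (n + 1) = b ∧ ∀ i ≤ n, r (f i) (f (i + 1)) := by
  constructor
  · intro h
    induction h using TransGen.head_induction_on with
    | @single a hab => exact ⟨0, fun i => if i = 0 then a else b, rfl, rfl, by simpa using hab⟩
    | @head a c hac _ ih =>
      obtain ⟨n, f, hf0, hfn, hf⟩ := ih
      refine ⟨n + 1, fun | 0 => a | i + 1 => f i, rfl, hfn, ?_⟩
      rintro (_ | i) hi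
      · simpa [hf0] using hac
      · exact hf i (by omega)
  · rintro ⟨n, f, rfl, rfl, hf⟩
    induction n with
    | zero => exact .single (hf 0 le_rfl)
    | succ n ih => exact (ih fun i hi => hf i (by omega)).tail (hf (n + 1) le_rfl)

end Relation

section CPair

variable {A M : Type} {C : Set (Set (List A))} {α : List A → M} {s t u : M}

theorem CPair.satCPair (h : CPair C α s t) : SatCPair C α s t :=
  fun ⟨F, hF, hs, ht⟩ => h ⟨α ⁻¹' F, hF, hs, ht⟩

theorem cPair_self_of_nonempty (hs : (α ⁻¹' {s}).Nonempty) : CPair C α s s := by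
  rintro ⟨K, -, hsK, hK⟩
  obtain ⟨w, hw⟩ := hs
  exact eq_empty_iff_forall_notMem.1 hK w ⟨hsK hw, hw⟩

theorem SatCPair.nonempty_preimage_left (hempty : (∅ : Set (List A)) ∈ C)
    (h : SatCPair C α s t) : (α ⁻¹' {s}).Nonempty := by
  rw [nonempty_iff_ne_empty]
  intro hs
  exact h ⟨∅, by rwa [preimage_empty], by rw [hs, preimage_empty], by simp⟩

theorem SatCPair.nonempty_preimage_right (huniv : (univ : Set (List A)) ∈ C)
    (h : SatCPair C α s t) : (α ⁻¹' {t}).Nonempty := by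
  rw [nonempty_iff_ne_empty]
  intro ht
  exact h ⟨univ, by rwa [preimage_univ], by rw [preimage_univ]; exact subset_univ _,
    by rw [preimage_univ, univ_inter, ht]⟩

theorem SatCPair.preimage_subset (h : SatCPair C α s t) {F : Set M} (hF : α ⁻¹' F ∈ C)
    (hs : α ⁻¹' {s} ⊆ α ⁻¹' F) : α ⁻¹' {t} ⊆ α ⁻¹' F := by
  by_cases ht : t ∈ F
  · exact preimage_mono (singleton_subset_iff.2 ht)
  · exact (h ⟨F, hF, hs, by rw [← preimage_inter, inter_singleton_eq_empty.2 ht,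
      preimage_empty]⟩).elim

theorem SatCPair.trans (hsu : SatCPair C α s u) (hut : SatCPair C α u t) : SatCPair C α s t :=
  fun ⟨F, hF, hs, ht⟩ => hut ⟨F, hF, hsu.preimage_subset hF hs, ht⟩

theorem TransGen.satCPair (h : TransGen (CPair C α) s t) : SatCPair C α s t := by
  induction h with
  | single h => exact h.satCPair
  | tail _ h ih => exact ih.trans h.satCPair

theorem preimage_mem_of_forall_cPair_mem [Finite M] (hempty : (∅ : Set (List A)) ∈ C)
    (huniv : (univ : Set (List A)) ∈ C) (hunion : SupClosed C) (hinter : InfClosed C)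
    {F : Set M} (hF : ∀ u ∈ F, ∀ v, CPair C α u v → v ∈ F) : α ⁻¹' F ∈ C := by
  have hsep : ∀ u ∈ F, ∀ v ∈ Fᶜ, ∃ K ∈ C, α ⁻¹' {u} ⊆ K ∧ K ∩ α ⁻¹' {v} = ∅ :=
    fun u hu v hv => of_not_not (mt (hF u hu v) hv)
  choose! H hHC hHu hHv using hsep
  have hFH : α ⁻¹' F = ⋃ u ∈ F, ⋂ v ∈ Fᶜ, H u v := by
    ext w
    simp only [mem_preimage, mem_iUnion, mem_iInter]
    refine ⟨fun hw => ⟨α w, hw, fun v hv => hHu _ hw v hv rfl⟩, ?_⟩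
    rintro ⟨u, hu, hw⟩
    by_contra hwF
    exact eq_empty_iff_forall_notMem.1 (hHv u hu _ hwF) w ⟨hw _ hwF, rfl⟩
  rw [hFH]
  exact hunion.biSup_mem (toFinite F) hempty fun u hu =>
    hinter.biInf_mem (toFinite _) huniv fun v hv => hHC u hu v hv

theorem satCPair_iff_transGen [Finite M] (hempty : (∅ : Set (List A)) ∈ C)
    (huniv : (univ : Set (List A)) ∈ C) (hunion : SupClosed C) (hinter : InfClosed C) :
    SatCPair C α s t ↔ TransGen (CPair C α) s t := by
  refine ⟨fun h => ?_, TransGen.satCPair⟩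
  have hreach : α ⁻¹' {m | ReflTransGen (CPair C α) s m} ∈ C :=
    preimage_mem_of_forall_cPair_mem hempty huniv hunion hinter fun _ hu _ huv => hu.tail huv
  obtain ⟨w, hw⟩ := h.nonempty_preimage_right huniv
  have hst : ReflTransGen (CPair C α) s t :=
    hw ▸ h.preimage_subset hreach (fun _ hv => hv ▸ ReflTransGen.refl) hw
  rcases reflTransGen_iff_eq_or_transGen.1 hst with rfl | hst
  · exact .single (cPair_self_of_nonempty (h.nonempty_preimage_left hempty))
  · exact hst

end CPair

theorem stmt_16_general {A M : Type} [Fintype M]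
    (C : Set (Set (List A)))
    (hempty : (∅ : Set (List A)) ∈ C) (huniv : (Set.univ : Set (List A)) ∈ C)
    (hunion : ∀ K L : Set (List A), K ∈ C → L ∈ C → K ∪ L ∈ C)
    (hinter : ∀ K L : Set (List A), K ∈ C → L ∈ C → K ∩ L ∈ C)
    (α : List A → M)
    (s t : M) :
    SatCPair C α s t ↔
      ∃ (n : ℕ) (r : ℕ → M), r 0 = s ∧ r (n + 1) = t ∧
        ∀ i ≤ n, CPair C α (r i) (r (i + 1)) := by
  rw [satCPair_iff_transGen hempty huniv (fun K hK L hL => hunion K L hK hL)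
    (fun K hK L hL => hinter K L hK hL), transGen_iff_exists_seq]

theorem stmt_16 {A M : Type} [Monoid M] [Fintype M]
    (C : Set (Set (List A)))
    (hempty : (∅ : Set (List A)) ∈ C) (huniv : (Set.univ : Set (List A)) ∈ C)
    (hunion : ∀ K L : Set (List A), K ∈ C → L ∈ C → K ∪ L ∈ C)
    (hinter : ∀ K L : Set (List A), K ∈ C → L ∈ C → K ∩ L ∈ C)
    (α : List A → M)
    (hone : α [] = 1) (hmul : ∀ u v : List A, α (u ++ v) = α u * α v)
    (hsurj : Function.Surjective α)
    (s t : M) :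
    SatCPair C α s t ↔
      ∃ (n : ℕ) (r : ℕ → M), r 0 = s ∧ r (n + 1) = t ∧
        ∀ i ≤ n, CPair C α (r i) (r (i + 1)) :=
  stmt_16_general C hempty huniv hunion hinter α s t
end

section
/- Let C be a quotienting lattice of regular languages, M a finite monoid, α : A* → M surjective. If (s₁,t₁) and (s₂,t₂) are saturated C-pairs for α, then (s₁s₂, t₁t₂) is a saturated C-pair for α. -/
section

variable {A M : Type} {C : Set (Set (List A))} {α : List A → M}

theorem satCPair_iff (hsurj : Function.Surjective α) {s t : M} :
    SatCPair C α s t ↔ ∀ F : Set M, α ⁻¹' F ∈ C → s ∈ F → t ∈ F := by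
  simp only [SatCPair, not_exists, not_and, ← Set.preimage_inter, ← Set.not_nonempty_iff_eq_empty,
    not_not, hsurj.nonempty_preimage, hsurj.preimage_subset_preimage_iff, Set.singleton_subset_iff,
    Set.inter_singleton_nonempty]

variable [Mul M] (hmul : ∀ u v : List A, α (u ++ v) = α u * α v)
include hmul

theorem preimage_mul_left_mem
    (hql : ∀ L ∈ C, ∀ u : List A, {w : List A | u ++ w ∈ L} ∈ C)
    {F : Set M} (hF : α ⁻¹' F ∈ C) {u : List A} :
    α ⁻¹' {m | α u * m ∈ F} ∈ C := by
  simpa only [Set.preimage_ofPred_eq, Set.mem_preimage, hmul] using hql _ hF u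

theorem preimage_mul_right_mem
    (hqr : ∀ L ∈ C, ∀ u : List A, {w : List A | w ++ u ∈ L} ∈ C)
    {F : Set M} (hF : α ⁻¹' F ∈ C) {u : List A} :
    α ⁻¹' {m | m * α u ∈ F} ∈ C := by
  simpa only [Set.preimage_ofPred_eq, Set.mem_preimage, hmul] using hqr _ hF u

end

theorem stmt_17_general {A M : Type} [Monoid M]
    (C : Set (Set (List A)))
    (hql : ∀ L ∈ C, ∀ u : List A, {w : List A | u ++ w ∈ L} ∈ C)
    (hqr : ∀ L ∈ C, ∀ u : List A, {w : List A | w ++ u ∈ L} ∈ C)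
    (α : List A → M)
    (hmul : ∀ u v : List A, α (u ++ v) = α u * α v)
    (hsurj : Function.Surjective α)
    (s₁ t₁ s₂ t₂ : M) (h1 : SatCPair C α s₁ t₁) (h2 : SatCPair C α s₂ t₂) :
    SatCPair C α (s₁ * s₂) (t₁ * t₂) := by
  rw [satCPair_iff hsurj] at h1 h2 ⊢
  intro F hF hs
  obtain ⟨u, rfl⟩ := hsurj s₁
  obtain ⟨v, rfl⟩ := hsurj t₂
  have hst : α u * α v ∈ F := h2 _ (preimage_mul_left_mem hmul hql hF) hs
  exact h1 _ (preimage_mul_right_mem hmul hqr hF) hst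

theorem stmt_17 {A M : Type} [Monoid M] [Fintype M]
    (C : Set (Set (List A)))
    (hreg : ∀ K ∈ C, IsReg K)
    (hempty : (∅ : Set (List A)) ∈ C) (huniv : (Set.univ : Set (List A)) ∈ C)
    (hunion : ∀ K L : Set (List A), K ∈ C → L ∈ C → K ∪ L ∈ C)
    (hinter : ∀ K L : Set (List A), K ∈ C → L ∈ C → K ∩ L ∈ C)
    (hql : ∀ L ∈ C, ∀ u : List A, {w : List A | u ++ w ∈ L} ∈ C)
    (hqr : ∀ L ∈ C, ∀ u : List A, {w : List A | w ++ u ∈ L} ∈ C)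
    (α : List A → M)
    (hone : α [] = 1) (hmul : ∀ u v : List A, α (u ++ v) = α u * α v)
    (hsurj : Function.Surjective α)
    (s₁ t₁ s₂ t₂ : M) (h1 : SatCPair C α s₁ t₁) (h2 : SatCPair C α s₂ t₂) :
    SatCPair C α (s₁ * s₂) (t₁ * t₂) :=
  stmt_17_general C hql hqr α hmul hsurj s₁ t₁ s₂ t₂ h1 h2
end

section
/- Let M be a finite monoid satisfying s^{ω+1} = s^ω t s^ω for all pairs (s,t) in a relation R that is compatible with multiplication and reflexive. Then for any chain r₀ = s, r₁, …, r_{n+1} = t with (r_i, r_{i+1}) ∈ R for all i, one has s^{ω+1} = s^ω t s^ω. Consequently, the equation s^{ω+1} = s^ω t s^ω for all C-pairs implies the same equation for all saturated C-pairs. -/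
/-! If `s^{ω+1} = s^ω a s^ω` and `R a b`, then compatibility gives `R (s^ω a s^ω) (s^ω b s^ω)`,
that is `R (s^{ω+1}) (s^ω b s^ω)`. Since `(s^{ω+1})^ω = s^ω`, the equation for this pair reads
`s^{ω+1} = s^ω b s^ω`. Induction along the chain finishes the proof. -/

open Relation

section

variable {M : Type} [Monoid M] {R : M → M → Prop} {n : ℕ}

lemma rel_mul_mul_of_rel (hrefl : ∀ s, R s s)
    (hmult : ∀ a b c d, R a b → R c d → R (a * c) (b * d)) {a b : M} (hab : R a b) (c d : M) :
    R (c * a * d) (c * b * d) :=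
  hmult _ _ _ _ (hmult _ _ _ _ (hrefl c) hab) (hrefl d)

lemma pow_succ_pow_of_isIdempotentElem {s : M} (he : IsIdempotentElem (s ^ n)) :
    (s ^ (n + 1)) ^ n = s ^ n := by
  rw [← pow_mul, mul_comm, pow_mul, he.pow_succ_eq]

lemma pow_succ_pow_succ_of_isIdempotentElem {s : M} (he : IsIdempotentElem (s ^ n)) :
    (s ^ (n + 1)) ^ (n + 1) = s ^ (n + 1) := by
  rw [pow_succ _ n, pow_succ_pow_of_isIdempotentElem he, pow_succ, ← mul_assoc, he.eq]

lemma pow_succ_eq_of_eq_of_rel (hrefl : ∀ s, R s s)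
    (hmult : ∀ a b c d, R a b → R c d → R (a * c) (b * d))
    (h : ∀ s t, R s t → s ^ (n + 1) = s ^ n * t * s ^ n) {s a b : M}
    (he : IsIdempotentElem (s ^ n))
    (ha : s ^ (n + 1) = s ^ n * a * s ^ n) (hab : R a b) :
    s ^ (n + 1) = s ^ n * b * s ^ n := by
  have hR : R (s ^ (n + 1)) (s ^ n * b * s ^ n) :=
    ha ▸ rel_mul_mul_of_rel hrefl hmult hab _ _
  calc s ^ (n + 1) = (s ^ (n + 1)) ^ (n + 1) := (pow_succ_pow_succ_of_isIdempotentElem he).symm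
    _ = s ^ n * (s ^ n * b * s ^ n) * s ^ n := by
      rw [h _ _ hR, pow_succ_pow_of_isIdempotentElem he]
    _ = s ^ n * b * s ^ n := by
      rw [← mul_assoc, ← mul_assoc, he.eq, mul_assoc, he.eq]

lemma pow_succ_eq_of_transGen (hrefl : ∀ s, R s s)
    (hmult : ∀ a b c d, R a b → R c d → R (a * c) (b * d))
    (h : ∀ s t, R s t → s ^ (n + 1) = s ^ n * t * s ^ n) {s t : M}
    (he : IsIdempotentElem (s ^ n)) (hst : TransGen R s t) :
    s ^ (n + 1) = s ^ n * t * s ^ n := by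
  induction hst with
  | single hst => exact h _ _ hst
  | tail _ hbc ih => exact pow_succ_eq_of_eq_of_rel hrefl hmult h he ih hbc

end

theorem stmt_18_general {M : Type} [Monoid M]
    -- an abstract relation `R` (the `C`-pair relation), reflexive and
    -- compatible with multiplication
    (R : M → M → Prop)
    (hrefl : ∀ s : M, R s s)
    (hmult : ∀ a b c d : M, R a b → R c d → R (a * c) (b * d))
    -- `ω` : a number such that `x^ω` is idempotent for every `x`
    (n : ℕ) (hidem : ∀ x : M, x ^ n * x ^ n = x ^ n)
    -- the equation holds for all pairs in `R`
    (h : ∀ s t : M, R s t → s ^ (n + 1) = s ^ n * t * s ^ n) :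
    -- then it holds along any chain of `R`-pairs, i.e. for the
    -- reflexive-transitive closure of `R` (the saturated `C`-pairs)
    ∀ (s t : M) (m : ℕ) (r : ℕ → M), r 0 = s → r (m + 1) = t →
      (∀ i ≤ m, R (r i) (r (i + 1))) →
      s ^ (n + 1) = s ^ n * t * s ^ n := by
  intro s t m r hs ht hchain
  subst hs ht
  have hst : TransGen R (r 0) (r (m + 1)) :=
    (transGen_of_succ_of_lt (fun i j => R (r i) (r j))
      (fun i hi => by simpa using hchain i (Nat.lt_succ_iff.mp hi.2)) m.succ_pos).lift r fun _ _ => id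
  exact pow_succ_eq_of_transGen hrefl hmult h (hidem _) hst

theorem stmt_18 {M : Type} [Monoid M] [Fintype M]
    -- an abstract relation `R` (the `C`-pair relation), reflexive and
    -- compatible with multiplication
    (R : M → M → Prop)
    (hrefl : ∀ s : M, R s s)
    (hmult : ∀ a b c d : M, R a b → R c d → R (a * c) (b * d))
    -- `ω` : a number such that `x^ω` is idempotent for every `x`
    (n : ℕ) (hn : 1 ≤ n) (hidem : ∀ x : M, x ^ n * x ^ n = x ^ n)
    -- the equation holds for all pairs in `R`
    (h : ∀ s t : M, R s t → s ^ (n + 1) = s ^ n * t * s ^ n) :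
    -- then it holds along any chain of `R`-pairs, i.e. for the
    -- reflexive-transitive closure of `R` (the saturated `C`-pairs)
    ∀ (s t : M) (m : ℕ) (r : ℕ → M), r 0 = s → r (m + 1) = t →
      (∀ i ≤ m, R (r i) (r (i + 1))) →
      s ^ (n + 1) = s ^ n * t * s ^ n :=
  stmt_18_general R hrefl hmult n hidem h
end
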